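/- arXiv:1204.5518 — 10 statements merged into one kernel-verified Lean document; each statement's English description precedes it below -/
import Mathlib

section
/- Let n ≥ 1 and let a₀(x), a₁(x), …, a_{n−1}(x) be real continuous functions on an open interval I = (a,b). Then there exists an n-times differentiable function y : I → ℝ satisfying the linear ordinary differential equation y^{(n)}(x) + a_{n−1}(x) y^{(n−1)}(x) + ⋯ + a₀(x) y(x) = 0 for all x ∈ I, such that y, y', …, y^{(n−1)} are linearly independent over I. -/
/-!
The state `u = (y, y', …, y^(n-1))` solves the first-order linear system `u' = C(t) u`, `C(t)` the
companion operator. A linear system with continuous coefficients is solvable on all of `(a, b)`: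
on a compact subinterval `‖C(t)‖ ≤ K`, so Picard–Lindelöf solves every initial value problem on
subintervals of one fixed length, and these solutions glue along the compact interval; by
uniqueness, the solutions on different compact intervals agree. Take the solution with
`y^(i)(t₀) = 0` for `i < n - 1` and `y^(n-1)(t₀) = 1`. If `∑ cᵢ y^(i) = 0`, evaluating at `t₀`
gives `c_{n-1} = 0`, and differentiating the remaining relation gives the same problem for `y'`
with one derivative fewer.
-/

open Set Finset
open scoped NNReal

section IntegralCurve

variable {E : Type*} [NormedAddCommGroup E] [NormedSpace ℝ E]

def IsIVPSolvableOn (v : ℝ → E → E) (s : Set ℝ) : Prop :=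
  ∀ t₀ ∈ s, ∀ x₀ : E, ∃ γ : ℝ → E, γ t₀ = x₀ ∧ IsIntegralCurveOn γ v s

variable {v : ℝ → E → E} {γ γ₁ γ₂ : ℝ → E} {s s₁ s₂ : Set ℝ}

lemma IsIntegralCurveOn.congr (h : IsIntegralCurveOn γ₁ v s) (he : EqOn γ γ₁ s) :
    IsIntegralCurveOn γ v s := fun t ht => by
  rw [he ht]
  exact (h t ht).congr he (he ht)

lemma IsIntegralCurveOn.union_of_isClosed (h₁ : IsIntegralCurveOn γ v s₁)
    (h₂ : IsIntegralCurveOn γ v s₂) (hs₁ : IsClosed s₁) (hs₂ : IsClosed s₂) :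
    IsIntegralCurveOn γ v (s₁ ∪ s₂) := by
  have hderiv : ∀ {s}, IsIntegralCurveOn γ v s → IsClosed s →
      ∀ t, HasDerivWithinAt γ (v t (γ t)) s t := fun {s} h hs t => by
    by_cases ht : t ∈ s
    · exact h t ht
    · exact HasFDerivWithinAt.of_notMem_closure (by rwa [hs.closure_eq])
  exact fun t _ => (hderiv h₁ hs₁ t).union (hderiv h₂ hs₂ t)

lemma IsIntegralCurveOn.ite_Icc {p m q : ℝ} (h₁ : IsIntegralCurveOn γ₁ v (Icc p m))
    (h₂ : IsIntegralCurveOn γ₂ v (Icc m q)) (hm : γ₁ m = γ₂ m) (hpm : p ≤ m) (hmq : m ≤ q) :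
    IsIntegralCurveOn (fun t => if t ≤ m then γ₁ t else γ₂ t) v (Icc p q) := by
  rw [← Icc_union_Icc_eq_Icc hpm hmq]
  refine .union_of_isClosed (h₁.congr fun t ht => if_pos ht.2) (h₂.congr fun t ht => ?_)
    isClosed_Icc isClosed_Icc
  rcases ht.1.eq_or_lt with rfl | h
  · simp [hm]
  · simp [not_le.2 h]

lemma IsIVPSolvableOn.Icc_union {p m q : ℝ} (h₁ : IsIVPSolvableOn v (Icc p m))
    (h₂ : IsIVPSolvableOn v (Icc m q)) (hpm : p ≤ m) (hmq : m ≤ q) :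
    IsIVPSolvableOn v (Icc p q) := by
  intro t₀ ht₀ x₀
  suffices ∃ γ₁ γ₂, IsIntegralCurveOn γ₁ v (Icc p m) ∧ IsIntegralCurveOn γ₂ v (Icc m q) ∧
      γ₁ m = γ₂ m ∧ (if t₀ ≤ m then γ₁ t₀ else γ₂ t₀) = x₀ by
    obtain ⟨γ₁, γ₂, hγ₁, hγ₂, hm, h₀⟩ := this
    exact ⟨_, h₀, hγ₁.ite_Icc hγ₂ hm hpm hmq⟩
  rcases le_total t₀ m with h | h
  · obtain ⟨γ₁, h₀, hγ₁⟩ := h₁ t₀ ⟨ht₀.1, h⟩ x₀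
    obtain ⟨γ₂, hm, hγ₂⟩ := h₂ m ⟨le_rfl, hmq⟩ (γ₁ m)
    exact ⟨γ₁, γ₂, hγ₁, hγ₂, hm.symm, by simp [h, h₀]⟩
  · obtain ⟨γ₂, h₀, hγ₂⟩ := h₂ t₀ ⟨h, ht₀.2⟩ x₀
    obtain ⟨γ₁, hm, hγ₁⟩ := h₁ m ⟨hpm, le_rfl⟩ (γ₂ m)
    refine ⟨γ₁, γ₂, hγ₁, hγ₂, hm, ?_⟩
    split_ifs with h'
    · obtain rfl := le_antisymm h' h
      exact hm.trans h₀
    · exact h₀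

end IntegralCurve

section LinearODE

variable {E : Type*} [NormedAddCommGroup E] [NormedSpace ℝ E] {L : ℝ → E →L[ℝ] E}

lemma isIVPSolvableOn_Icc_of_two_mul_le [CompleteSpace E] {K : ℝ≥0} {p q : ℝ}
    (hL : ContinuousOn L (Icc p q)) (hK : ∀ t ∈ Icc p q, ‖L t‖₊ ≤ K) (hpq : 2 * K * (q - p) ≤ 1) :
    IsIVPSolvableOn (fun t x => L t x) (Icc p q) := by
  intro t₀ ht₀ x₀
  -- On the ball of radius `‖x₀‖` the field is bounded by `2K‖x₀‖`, so the admissible time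
  -- `1 / (2K)` does not depend on `x₀`.
  have hpl : IsPicardLindelof (fun t x => L t x) ⟨t₀, ht₀⟩ x₀ ‖x₀‖₊ 0 (2 * K * ‖x₀‖₊) K :=
    { lipschitzOnWith := fun t ht => ((L t).lipschitz.weaken (hK t ht)).lipschitzOnWith
      continuousOn := fun x _ => hL.clm_apply continuousOn_const
      norm_le := fun t ht x hx => by
        have hx : ‖x‖ ≤ 2 * ‖x₀‖ := by
          have := norm_le_of_mem_closedBall hx
          push_cast at this
          linarith
        have hKt : ‖L t‖ ≤ K := hK t ht
        calc ‖L t x‖ ≤ ‖L t‖ * ‖x‖ := (L t).le_opNorm x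
          _ ≤ K * (2 * ‖x₀‖) := by gcongr
          _ = _ := by push_cast; ring
      mul_max_le := by
        have : max (q - t₀) (t₀ - p) ≤ q - p := max_le (by linarith [ht₀.1]) (by linarith [ht₀.2])
        push_cast
        calc 2 * K * ‖x₀‖ * max (q - t₀) (t₀ - p) ≤ 2 * K * ‖x₀‖ * (q - p) := by gcongr
          _ = 2 * K * (q - p) * ‖x₀‖ := by ring
          _ ≤ 1 * ‖x₀‖ := by gcongr
          _ = _ := by simp }
  exact hpl.exists_eq_forall_mem_Icc_hasDerivWithinAt₀

lemma isIVPSolvableOn_Icc [CompleteSpace E] {c d : ℝ} (hL : ContinuousOn L (Icc c d)) :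
    IsIVPSolvableOn (fun t x => L t x) (Icc c d) := by
  obtain ⟨K, hK⟩ := (isCompact_Icc.image_of_continuousOn hL.nnnorm).bddAbove
  set τ : ℝ := (2 * K + 1)⁻¹
  have hτ : 0 < τ := by positivity
  have hKτ : 2 * K * τ ≤ 1 := by
    rw [← div_eq_mul_inv, div_le_one (by positivity)]
    linarith
  have short : ∀ p q, c ≤ p → q ≤ d → q - p ≤ τ → IsIVPSolvableOn (fun t x => L t x) (Icc p q) :=
    fun p q hp hq hpq => isIVPSolvableOn_Icc_of_two_mul_le (hL.mono (Icc_subset_Icc hp hq))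
      (fun t ht => hK ⟨t, Icc_subset_Icc hp hq ht, rfl⟩) (by nlinarith)
  have cover : ∀ k : ℕ, ∀ p q, c ≤ p → q ≤ d → q - p ≤ k * τ →
      IsIVPSolvableOn (fun t x => L t x) (Icc p q) := by
    intro k
    induction k with
    | zero => exact fun p q hp hq hpq => short p q hp hq (by simp at hpq; linarith)
    | succ k ih =>
      intro p q hp hq hpq
      rcases lt_or_ge q p with hqp | hpq'
      · intro t ht
        exact absurd (ht.1.trans ht.2) (not_le.2 hqp)
      have hm : p ≤ min q (p + τ) := le_min hpq' (by linarith)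
      refine (short p _ hp ((min_le_left _ _).trans hq) ?_).Icc_union
        (ih _ q (hp.trans hm) hq ?_) hm (min_le_left _ _)
      · linarith [min_le_right q (p + τ)]
      · push_cast at hpq
        rcases min_cases q (p + τ) with ⟨h, _⟩ | ⟨h, _⟩ <;> rw [h] <;> nlinarith
  refine cover ⌈(d - c) / τ⌉₊ c d le_rfl le_rfl ?_
  rw [← div_le_iff₀ hτ]
  exact Nat.le_ceil _

lemma eqOn_Icc_of_isIntegralCurveOn {p q t₀ : ℝ} (hL : ContinuousOn L (Icc p q))
    {f g : ℝ → E} (hf : IsIntegralCurveOn f (fun t x => L t x) (Icc p q))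
    (hg : IsIntegralCurveOn g (fun t x => L t x) (Icc p q)) (ht₀ : t₀ ∈ Ioo p q)
    (h : f t₀ = g t₀) : EqOn f g (Icc p q) := by
  obtain ⟨K, hK⟩ := (isCompact_Icc.image_of_continuousOn hL.nnnorm).bddAbove
  exact ODE_solution_unique_of_mem_Icc (s := fun _ => univ)
    (fun t ht => ((L t).lipschitz.weaken (hK ⟨t, Ioo_subset_Icc_self ht, rfl⟩)).lipschitzOnWith)
    ht₀ hf.continuousOn (fun t ht => (hf.isIntegralCurveAt (Icc_mem_nhds ht.1 ht.2)).hasDerivAt)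
    (fun _ _ => trivial) hg.continuousOn
    (fun t ht => (hg.isIntegralCurveAt (Icc_mem_nhds ht.1 ht.2)).hasDerivAt)
    (fun _ _ => trivial) h

theorem exists_eq_forall_mem_Ioo_hasDerivAt_clm [CompleteSpace E] {a b t₀ : ℝ}
    (hL : ContinuousOn L (Ioo a b)) (ht₀ : t₀ ∈ Ioo a b) (x₀ : E) :
    ∃ γ : ℝ → E, γ t₀ = x₀ ∧ ∀ t ∈ Ioo a b, HasDerivAt γ (L t (γ t)) t := by
  have hJ : ∀ t ∈ Ioo a b, ∃ p q, a < p ∧ p < t ∧ p < t₀ ∧ t < q ∧ t₀ < q ∧ q < b := by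
    intro t ht
    obtain ⟨p, hap, hp⟩ := exists_between (lt_min ht.1 ht₀.1)
    obtain ⟨q, hq, hqb⟩ := exists_between (max_lt ht.2 ht₀.2)
    exact ⟨p, q, hap, (lt_min_iff.1 hp).1, (lt_min_iff.1 hp).2, (max_lt_iff.1 hq).1,
      (max_lt_iff.1 hq).2, hqb⟩
  choose! p q hap hpt hpt₀ hqt hqt₀ hqb using hJ
  have hsol : ∀ t ∈ Ioo a b, ∃ γ : ℝ → E,
      γ t₀ = x₀ ∧ IsIntegralCurveOn γ (fun t x => L t x) (Icc (p t) (q t)) := fun t ht =>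
    isIVPSolvableOn_Icc (hL.mono (Icc_subset_Ioo (hap t ht) (hqb t ht))) t₀
      ⟨(hpt₀ t ht).le, (hqt₀ t ht).le⟩ x₀
  choose! F hF₀ hF using hsol
  have hagree : ∀ t ∈ Ioo a b, ∀ s ∈ Ioo (p t) (q t), F s s = F t s := by
    intro t ht s hs
    have hs' : s ∈ Ioo a b := ⟨(hap t ht).trans hs.1, hs.2.trans (hqb t ht)⟩
    refine eqOn_Icc_of_isIntegralCurveOn
      (hL.mono (Icc_subset_Ioo (lt_max_of_lt_left (hap s hs')) (min_lt_of_left_lt (hqb s hs'))))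
      ((hF s hs').mono (Icc_subset_Icc (le_max_left _ _) (min_le_left _ _)))
      ((hF t ht).mono (Icc_subset_Icc (le_max_right _ _) (min_le_right _ _)))
      ⟨max_lt (hpt₀ s hs') (hpt₀ t ht), lt_min (hqt₀ s hs') (hqt₀ t ht)⟩
      ((hF₀ s hs').trans (hF₀ t ht).symm)
      ⟨max_le (hpt s hs').le hs.1.le, le_min (hqt s hs').le hs.2.le⟩
  refine ⟨fun t => F t t, hF₀ t₀ ht₀, fun t ht => ?_⟩
  have hFt := ((hF t ht).isIntegralCurveAt (Icc_mem_nhds (hpt t ht) (hqt t ht))).hasDerivAt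
  exact hFt.congr_of_eventuallyEq
    (Filter.eventuallyEq_of_mem (Ioo_mem_nhds (hpt t ht) (hqt t ht)) (hagree t ht))

end LinearODE

section DerivativeChain

variable {s : Set ℝ} {Y : ℕ → ℝ → ℝ} {n : ℕ}

lemma iteratedDerivWithin_eqOn_of_hasDerivAt (hs : IsOpen s)
    (hY : ∀ i < n, ∀ t ∈ s, HasDerivAt (Y i) (Y (i + 1) t) t) :
    ∀ i ≤ n, EqOn (iteratedDerivWithin i (Y 0) s) (Y i) s := by
  intro i
  induction i with
  | zero => exact fun _ t _ => by rw [iteratedDerivWithin_zero]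
  | succ i ih =>
    intro hi t ht
    rw [iteratedDerivWithin_succ, derivWithin_congr (ih (by omega)) (ih (by omega) ht),
      derivWithin_of_isOpen hs ht, (hY i (by omega) t ht).deriv]

lemma contDiffOn_of_hasDerivAt (hs : IsOpen s)
    (hY : ∀ i < n, ∀ t ∈ s, HasDerivAt (Y i) (Y (i + 1) t) t) (hn : ContinuousOn (Y n) s) :
    ContDiffOn ℝ n (Y 0) s := by
  have hiter := iteratedDerivWithin_eqOn_of_hasDerivAt hs hY
  refine (contDiffOn_iff_continuousOn_differentiableOn_deriv hs.uniqueDiffOn).2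
    ⟨fun m hm => ?_, fun m hm => ?_⟩
  · rcases (Nat.cast_le.1 hm).lt_or_eq with hm | rfl
    · exact (HasDerivAt.continuousOn (hY m hm)).congr (hiter m hm.le)
    · exact hn.congr (hiter m le_rfl)
  · have hm : m < n := Nat.cast_lt.1 hm
    exact fun t ht => ((hY m hm t ht).differentiableAt.differentiableWithinAt).congr
      (hiter m hm.le) (hiter m hm.le ht)

lemma eq_zero_of_sum_mul_eq_zero_of_hasDerivAt (hs : IsOpen s) {t₀ : ℝ} (ht₀ : t₀ ∈ s)
    {c : ℕ → ℝ} (hY : ∀ i, i + 1 < n → ∀ t ∈ s, HasDerivAt (Y i) (Y (i + 1) t) t)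
    (hY₀ : ∀ i < n, Y i t₀ = if i + 1 = n then 1 else 0)
    (hc : ∀ t ∈ s, ∑ i ∈ range n, c i * Y i t = 0) : ∀ i < n, c i = 0 := by
  induction n generalizing Y c with
  | zero => exact fun i hi => absurd hi (Nat.not_lt_zero i)
  | succ n ih =>
    have hcn : c n = 0 := by
      have := hc t₀ ht₀
      rwa [sum_range_succ, sum_eq_zero fun i hi => by
        rw [hY₀ i (by simp at hi; omega), if_neg (by simp at hi; omega), mul_zero],
        hY₀ n n.lt_succ_self, if_pos rfl, zero_add, mul_one] at this
    have hc' : ∀ t ∈ s, ∑ i ∈ range n, c i * Y (i + 1) t = 0 := by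
      intro t ht
      have hderiv : HasDerivAt (fun t => ∑ i ∈ range n, c i * Y i t)
          (∑ i ∈ range n, c i * Y (i + 1) t) t :=
        HasDerivAt.fun_sum fun i hi => (hY i (by simp at hi; omega) t ht).const_mul (c i)
      refine hderiv.unique ((hasDerivAt_const t 0).congr_of_eventuallyEq ?_)
      filter_upwards [hs.mem_nhds ht] with t' ht'
      simpa [sum_range_succ, hcn] using hc t' ht'
    have hc₀ := ih (Y := fun i => Y (i + 1)) (fun i hi t ht => hY (i + 1) (by omega) t ht)
      (fun i hi => by simpa using hY₀ (i + 1) (by omega)) hc'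
    intro i hi
    rcases (Nat.lt_succ_iff.1 hi).lt_or_eq with hi | rfl
    · exact hc₀ i hi
    · exact hcn

end DerivativeChain

section Companion

variable {n : ℕ} {A : ℕ → ℝ → ℝ}

-- The `i`-th derivative, `i ≤ n`, of a solution whose state `(y, y', …, y^(n-1))` at time `t` is
-- `x`: for `i = n` it is read off the equation.
def companionJet (n : ℕ) (A : ℕ → ℝ → ℝ) (t : ℝ) (x : Fin n → ℝ) (i : ℕ) : ℝ :=
  if h : i < n then x ⟨i, h⟩ else -∑ j : Fin n, A j t * x j

def companion (n : ℕ) (A : ℕ → ℝ → ℝ) (t : ℝ) : (Fin n → ℝ) →L[ℝ] Fin n → ℝ :=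
  .pi fun i => if h : (i : ℕ) + 1 < n then .proj ⟨i + 1, h⟩ else -∑ j : Fin n, A j t • .proj j

lemma companion_apply (t : ℝ) (x : Fin n → ℝ) (i : Fin n) :
    companion n A t x i = companionJet n A t x (i + 1) := by
  by_cases h : (i : ℕ) + 1 < n <;> simp [companion, companionJet, h]

lemma companionJet_self_add_sum (t : ℝ) (x : Fin n → ℝ) :
    companionJet n A t x n + ∑ i ∈ range n, A i t * companionJet n A t x i = 0 := by
  simp [companionJet, Finset.sum_range]

lemma continuousOn_companion {s : Set ℝ} (hA : ∀ i < n, ContinuousOn (A i) s) :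
    ContinuousOn (companion n A) s := by
  refine continuousOn_clm_apply.2 fun x => continuousOn_pi.2 fun i => ?_
  simp only [companion_apply, companionJet]
  split_ifs
  · exact continuousOn_const
  · exact (continuousOn_finsetSum _ fun (j : Fin n) _ => (hA j j.2).mul continuousOn_const).neg

variable {s : Set ℝ} {u : ℝ → Fin n → ℝ}

lemma hasDerivAt_companionJet (hu : ∀ t ∈ s, HasDerivAt u (companion n A t (u t)) t)
    {i : ℕ} (hi : i < n) {t : ℝ} (ht : t ∈ s) :
    HasDerivAt (fun t => companionJet n A t (u t) i) (companionJet n A t (u t) (i + 1)) t := by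
  simpa [companion_apply, companionJet, hi] using hasDerivAt_pi.1 (hu t ht) ⟨i, hi⟩

lemma continuousOn_companionJet_self (hA : ∀ i < n, ContinuousOn (A i) s)
    (hu : ∀ t ∈ s, HasDerivAt u (companion n A t (u t)) t) :
    ContinuousOn (fun t => companionJet n A t (u t) n) s := by
  have hu' : ContinuousOn u s := HasDerivAt.continuousOn hu
  simp only [companionJet, lt_irrefl, dite_false]
  exact (continuousOn_finsetSum _ fun (j : Fin n) _ =>
    (hA j j.2).mul ((continuous_apply j).comp_continuousOn hu')).neg

end Companion

theorem exists_solution_with_independent_derivatives_general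
    (n : ℕ) (a b : ℝ) (hab : a < b)
    (A : ℕ → ℝ → ℝ) (hA : ∀ i < n, ContinuousOn (A i) (Set.Ioo a b)) :
    ∃ y : ℝ → ℝ, ContDiffOn ℝ n y (Set.Ioo a b) ∧
      (∀ x ∈ Set.Ioo a b,
        iteratedDerivWithin n y (Set.Ioo a b) x
          + ∑ i ∈ Finset.range n, A i x * iteratedDerivWithin i y (Set.Ioo a b) x = 0) ∧
      (∀ c : ℕ → ℝ,
        (∀ x ∈ Set.Ioo a b,
          ∑ i ∈ Finset.range n, c i * iteratedDerivWithin i y (Set.Ioo a b) x = 0) →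
        ∀ i < n, c i = 0) := by
  have ht₀ : (a + b) / 2 ∈ Ioo a b := ⟨by linarith, by linarith⟩
  obtain ⟨u, hu₀, hu⟩ := exists_eq_forall_mem_Ioo_hasDerivAt_clm (continuousOn_companion hA) ht₀
    (fun i : Fin n => if (i : ℕ) + 1 = n then 1 else 0)
  set Y : ℕ → ℝ → ℝ := fun i t => companionJet n A t (u t) i
  have hY : ∀ i < n, ∀ t ∈ Ioo a b, HasDerivAt (Y i) (Y (i + 1) t) t :=
    fun i hi t ht => hasDerivAt_companionJet hu hi ht
  have hiter := iteratedDerivWithin_eqOn_of_hasDerivAt isOpen_Ioo hY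
  refine ⟨Y 0, contDiffOn_of_hasDerivAt isOpen_Ioo hY (continuousOn_companionJet_self hA hu),
    fun t ht => ?_, fun c hc => ?_⟩
  · rw [hiter n le_rfl ht, sum_congr rfl fun i hi => by rw [hiter i (mem_range.1 hi).le ht]]
    exact companionJet_self_add_sum t (u t)
  · refine eq_zero_of_sum_mul_eq_zero_of_hasDerivAt isOpen_Ioo ht₀
      (fun i hi => hY i (by omega)) (fun i hi => by simp [Y, companionJet, hi, hu₀]) ?_
    intro t ht
    rw [← hc t ht]
    exact sum_congr rfl fun i hi => by rw [hiter i (mem_range.1 hi).le ht]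

/-- Given continuous coefficients `a₀, …, a_{n-1}` on an open interval
`I = (a, b)` with `n ≥ 1`, there exists a function `y` that is `n`-times
(continuously) differentiable on `I`, solves the linear ODE
`y^(n) + a_{n-1} y^(n-1) + ⋯ + a₀ y = 0` on `I`, and is such that
`y, y', …, y^(n-1)` are linearly independent over `I`. -/
theorem exists_solution_with_independent_derivatives
    (n : ℕ) (hn : 1 ≤ n) (a b : ℝ) (hab : a < b)
    (A : ℕ → ℝ → ℝ) (hA : ∀ i < n, ContinuousOn (A i) (Set.Ioo a b)) :
    ∃ y : ℝ → ℝ, ContDiffOn ℝ n y (Set.Ioo a b) ∧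
      (∀ x ∈ Set.Ioo a b,
        iteratedDerivWithin n y (Set.Ioo a b) x
          + ∑ i ∈ Finset.range n, A i x * iteratedDerivWithin i y (Set.Ioo a b) x = 0) ∧
      (∀ c : ℕ → ℝ,
        (∀ x ∈ Set.Ioo a b,
          ∑ i ∈ Finset.range n, c i * iteratedDerivWithin i y (Set.Ioo a b) x = 0) →
        ∀ i < n, c i = 0) :=
  exists_solution_with_independent_derivatives_general n a b hab A hA
end

section
/- Let α₁, α₂, a₀, a₁, b₀, b₁ be real constants satisfying the three polynomial conditions (E1) 7α₁b₁² + α₁a₀ + 2α₂ − 4α₁b₀ − 3α₁a₁b₁ = 0, (E2) 12α₁b₁b₀ − α₁a₀b₁ − 4α₁a₁b₀ + 2α₂a₁ − α₁b₁³ − 2α₂b₁ + α₁a₁b₁² = 0, and (E3) 4α₁b₀² + α₂a₀ − α₁b₁²b₀ + α₁a₁b₀b₁ − α₁a₀b₀ − 2α₂b₀ = 0. Then for all infinitely differentiable functions u, v : ℝ → ℝ satisfying u''(x) + a₁u'(x) + a₀u(x) = 0 and v''(x) + b₁v'(x) + b₀v(x) = 0 for all x ∈ ℝ, the function F(x) =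 u'''(x) + α₁(v'(x)² + v(x)v''(x)) + α₂v(x)² satisfies F''(x) + a₁F'(x) + a₀F(x) = 0 for all x ∈ ℝ. -/
/-- The operator `F[u, v] = (u_{xx} + α₁ v v_x)_x + α₂ v²` applied to functions of `x`:
`F(x) = u'''(x) + α₁ (v'(x)² + v(x) v''(x)) + α₂ v(x)²`. -/
noncomputable def Fop (α₁ α₂ : ℝ) (u v : ℝ → ℝ) : ℝ → ℝ := fun x =>
  iteratedDeriv 3 u x + α₁ * ((deriv v x) ^ 2 + v x * iteratedDeriv 2 v x) + α₂ * (v x) ^ 2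

/-- Under the conditions (E1), (E2), (E3) on the parameters, for all smooth
`u, v` with `u'' + a₁ u' + a₀ u = 0` and `v'' + b₁ v' + b₀ v = 0` on `ℝ`, the function
`F = F[u, v]` satisfies `F'' + a₁ F' + a₀ F = 0` on `ℝ`. -/
theorem invariance_first_equation
    (α₁ α₂ a₀ a₁ b₀ b₁ : ℝ)
    (hE1 : 7 * α₁ * b₁ ^ 2 + α₁ * a₀ + 2 * α₂ - 4 * α₁ * b₀ - 3 * α₁ * a₁ * b₁ = 0)
    (hE2 : 12 * α₁ * b₁ * b₀ - α₁ * a₀ * b₁ - 4 * α₁ * a₁ * b₀ + 2 * α₂ * a₁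
      - α₁ * b₁ ^ 3 - 2 * α₂ * b₁ + α₁ * a₁ * b₁ ^ 2 = 0)
    (hE3 : 4 * α₁ * b₀ ^ 2 + α₂ * a₀ - α₁ * b₁ ^ 2 * b₀ + α₁ * a₁ * b₀ * b₁
      - α₁ * a₀ * b₀ - 2 * α₂ * b₀ = 0)
    (u v : ℝ → ℝ) (hu : ContDiff ℝ (⊤ : ℕ∞) u) (hv : ContDiff ℝ (⊤ : ℕ∞) v)
    (hueq : ∀ x : ℝ, iteratedDeriv 2 u x + a₁ * deriv u x + a₀ * u x = 0)
    (hveq : ∀ x : ℝ, iteratedDeriv 2 v x + b₁ * deriv v x + b₀ * v x = 0) :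
    ∀ x : ℝ, iteratedDeriv 2 (Fop α₁ α₂ u v) x + a₁ * deriv (Fop α₁ α₂ u v) x
      + a₀ * Fop α₁ α₂ u v x = 0 := by
  have hud : Differentiable ℝ u := hu.differentiable (by simp)
  have hu1 : ContDiff ℝ (⊤ : ℕ∞) (deriv u) := (contDiff_infty_iff_deriv.mp (hu.of_le (by simp))).2
  have hu1d : Differentiable ℝ (deriv u) := hu1.differentiable (by simp)
  have hvd : Differentiable ℝ v := hv.differentiable (by simp)
  have hv1 : ContDiff ℝ (⊤ : ℕ∞) (deriv v) := (contDiff_infty_iff_deriv.mp (hv.of_le (by simp))).2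
  have hv1d : Differentiable ℝ (deriv v) := hv1.differentiable (by simp)
  have hdu : deriv (deriv u) = fun x => -(a₁ * deriv u x) - a₀ * u x := by
    funext x
    have h := hueq x
    simp only [iteratedDeriv_succ, iteratedDeriv_one, iteratedDeriv_zero] at h
    linarith
  have hdv : deriv (deriv v) = fun x => -(b₁ * deriv v x) - b₀ * v x := by
    funext x
    have h := hveq x
    simp only [iteratedDeriv_succ, iteratedDeriv_one, iteratedDeriv_zero] at h
    linarith
  have hU : ∀ x, HasDerivAt u (deriv u x) x := fun x => (hud x).hasDerivAt
  have hV : ∀ x, HasDerivAt v (deriv v x) x := fun x => (hvd x).hasDerivAt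
  have hP : ∀ x, HasDerivAt (deriv u) (-(a₁ * deriv u x) - a₀ * u x) x := by
    intro x
    have h := (hu1d x).hasDerivAt
    rwa [show deriv (deriv u) x = -(a₁ * deriv u x) - a₀ * u x from congrFun hdu x] at h
  have hQ : ∀ x, HasDerivAt (deriv v) (-(b₁ * deriv v x) - b₀ * v x) x := by
    intro x
    have h := (hv1d x).hasDerivAt
    rwa [show deriv (deriv v) x = -(b₁ * deriv v x) - b₀ * v x from congrFun hdv x] at h
  -- the function G equal to Fop
  set G : ℝ → ℝ := fun x => a₀ * a₁ * u x + (a₁ ^ 2 - a₀) * deriv u x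
      + α₁ * (deriv v x) ^ 2 - α₁ * b₁ * (v x * deriv v x)
      + (α₂ - α₁ * b₀) * (v x) ^ 2 with hGdef
  have hFG : Fop α₁ α₂ u v = G := by
    funext x
    have h3 : iteratedDeriv 3 u x = deriv (deriv (deriv u)) x := by
      simp [iteratedDeriv_succ, iteratedDeriv_one, iteratedDeriv_zero]
    have hd3 : deriv (deriv (deriv u)) x
        = -(a₁ * (-(a₁ * deriv u x) - a₀ * u x)) - a₀ * deriv u x := by
      rw [hdu]
      exact (((hP x).const_mul a₁).neg.sub ((hU x).const_mul a₀)).deriv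
    have h2v : iteratedDeriv 2 v x = -(b₁ * deriv v x) - b₀ * v x := by
      simp only [iteratedDeriv_succ, iteratedDeriv_one, iteratedDeriv_zero]
      exact congrFun hdv x
    simp only [Fop, hGdef, h3, hd3, h2v]
    ring
  -- first derivative of G
  set G1 : ℝ → ℝ := fun x => (2 * α₂ + b₁ ^ 2 * α₁ - 4 * b₀ * α₁) * (v x * deriv v x)
      + (-3 * b₁ * α₁) * (deriv v x) ^ 2 + (b₀ * b₁ * α₁) * (v x) ^ 2
      + (2 * a₀ * a₁ - a₁ ^ 3) * deriv u x + (a₀ ^ 2 - a₀ * a₁ ^ 2) * u x with hG1def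
  have hG1 : ∀ x, HasDerivAt G (G1 x) x := by
    intro x
    have h := (((((hU x).const_mul (a₀ * a₁)).add ((hP x).const_mul (a₁ ^ 2 - a₀))).add
        (((hQ x).pow 2).const_mul α₁)).sub (((hV x).mul (hQ x)).const_mul (α₁ * b₁))).add
        (((hV x).pow 2).const_mul (α₂ - α₁ * b₀))
    refine h.congr_deriv ?_
    simp only [hG1def]
    ring
  have hdG : deriv G = G1 := funext fun x => (hG1 x).deriv
  -- second derivative of G
  have hG2 : ∀ x, HasDerivAt G1
      (2 * α₂ * (deriv v x) ^ 2 - 2 * b₁ * α₂ * (v x * deriv v x)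
        + 7 * b₁ ^ 2 * α₁ * (deriv v x) ^ 2 - b₁ ^ 3 * α₁ * (v x * deriv v x)
        - 2 * b₀ * α₂ * (v x) ^ 2 - 4 * b₀ * α₁ * (deriv v x) ^ 2
        + 12 * b₀ * b₁ * α₁ * (v x * deriv v x) - b₀ * b₁ ^ 2 * α₁ * (v x) ^ 2
        + 4 * b₀ ^ 2 * α₁ * (v x) ^ 2 + a₁ ^ 4 * deriv u x - 3 * a₀ * a₁ ^ 2 * deriv u x
        + a₀ * a₁ ^ 3 * u x + a₀ ^ 2 * deriv u x - 2 * a₀ ^ 2 * a₁ * u x) x := by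
    intro x
    have h := ((((((hV x).mul (hQ x)).const_mul (2 * α₂ + b₁ ^ 2 * α₁ - 4 * b₀ * α₁)).add
        (((hQ x).pow 2).const_mul (-3 * b₁ * α₁))).add
        (((hV x).pow 2).const_mul (b₀ * b₁ * α₁))).add
        ((hP x).const_mul (2 * a₀ * a₁ - a₁ ^ 3))).add
        ((hU x).const_mul (a₀ ^ 2 - a₀ * a₁ ^ 2))
    refine h.congr_deriv ?_
    ring
  intro x
  have h2F : iteratedDeriv 2 (Fop α₁ α₂ u v) x = deriv (deriv G) x := by
    rw [hFG]
    simp [iteratedDeriv_succ, iteratedDeriv_one, iteratedDeriv_zero]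
  rw [h2F, hFG, hdG, (hG2 x).deriv]
  simp only [hGdef, hG1def]
  linear_combination (deriv v x) ^ 2 * hE1 + (v x * deriv v x) * hE2 + (v x) ^ 2 * hE3
end

section
/- Let a₀, a₁, b₀, b₁, β₁, β₂ be real constants. Then the following two statements are equivalent: (i) for all infinitely differentiable functions u, v : ℝ → ℝ satisfying u''(x) + a₁u'(x) + a₀u(x) = 0 and v''(x) + b₁v'(x) + b₀v(x) = 0 for all x ∈ ℝ, the function G(x) = u''(x) + β₁u(x) + β₂v(x) satisfies G''(x) + b₁G'(x) + b₀G(x) = 0 for all x ∈ ℝ; (ii) the two polynomial conditions (E4) −a₁³ + 2a₀a₁ − β₁a₁ + a₁²b₁ − a₀b₁ + β₁b₁ − a₁b₀ = 0 and (E5) −a₀a₁² + a₀² − β₁a₀ + a₀a₁b₁ − a₀b₀ + β₁b₀ = 0 hold. -/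
/-- The operator `G[u, v] = u_{xx} + β₁ u + β₂ v` applied to functions of `x`:
`G(x) = u''(x) + β₁ u(x) + β₂ v(x)`. -/
noncomputable def Gop (β₁ β₂ : ℝ) (u v : ℝ → ℝ) : ℝ → ℝ := fun x =>
  iteratedDeriv 2 u x + β₁ * u x + β₂ * v x

open NormedSpace

attribute [local instance] Matrix.linftyOpNormedRing Matrix.linftyOpNormedAlgebra
  Matrix.linftyOpNormedSpace

noncomputable instance : CompleteSpace (Matrix (Fin 2) (Fin 2) ℝ) :=
  (by infer_instance : CompleteSpace (Matrix (Fin 2) (Fin 2) ℝ))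

/-- The entry map as a continuous linear map. -/
noncomputable def entryCLM (i j : Fin 2) : Matrix (Fin 2) (Fin 2) ℝ →L[ℝ] ℝ :=
  LinearMap.mkContinuous
    { toFun := fun M => M i j
      map_add' := fun M N => rfl
      map_smul' := fun c M => rfl } 1
    (fun M => by
      rw [one_mul]
      have h1 : ‖M i j‖₊ ≤ ∑ j' : Fin 2, ‖M i j'‖₊ :=
        Finset.single_le_sum (f := fun j' => ‖M i j'‖₊) (fun _ _ => zero_le)
          (Finset.mem_univ j)
      have h2 : (∑ j' : Fin 2, ‖M i j'‖₊) ≤ ‖M‖₊ := by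
        rw [Matrix.linfty_opNNNorm_def]
        exact Finset.le_sup (f := fun i' => ∑ j' : Fin 2, ‖M i' j'‖₊) (Finset.mem_univ i)
      exact_mod_cast h1.trans h2)

/-- Companion matrix of `y'' + a₁ y' + a₀ y = 0`. -/
noncomputable def Amat (a₀ a₁ : ℝ) : Matrix (Fin 2) (Fin 2) ℝ := !![0, 1; -a₀, -a₁]

/-- Fundamental matrix solution. -/
noncomputable def Wmat (a₀ a₁ : ℝ) (t : ℝ) : Matrix (Fin 2) (Fin 2) ℝ :=
  exp (t • Amat a₀ a₁)

noncomputable def sol (a₀ a₁ : ℝ) (j : Fin 2) : ℝ → ℝ := fun t => Wmat a₀ a₁ t 0 j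

noncomputable def solD (a₀ a₁ : ℝ) (j : Fin 2) : ℝ → ℝ := fun t => Wmat a₀ a₁ t 1 j

lemma hasDerivAt_Wmat (a₀ a₁ t : ℝ) :
    HasDerivAt (Wmat a₀ a₁) (Amat a₀ a₁ * Wmat a₀ a₁ t) t :=
  hasDerivAt_exp_smul_const' (𝕂 := ℝ) (Amat a₀ a₁) t

lemma hasDerivAt_sol (a₀ a₁ : ℝ) (j : Fin 2) (t : ℝ) :
    HasDerivAt (sol a₀ a₁ j) (solD a₀ a₁ j t) t := by
  have h := (entryCLM 0 j).hasFDerivAt.comp_hasDerivAt t (hasDerivAt_Wmat a₀ a₁ t)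
  have he : entryCLM 0 j (Amat a₀ a₁ * Wmat a₀ a₁ t) = solD a₀ a₁ j t := by
    show (Amat a₀ a₁ * Wmat a₀ a₁ t) 0 j = Wmat a₀ a₁ t 1 j
    simp [Amat, Matrix.mul_apply, Fin.sum_univ_two]
  replace h := h.congr_deriv he
  exact h

lemma hasDerivAt_solD (a₀ a₁ : ℝ) (j : Fin 2) (t : ℝ) :
    HasDerivAt (solD a₀ a₁ j) (-a₀ * sol a₀ a₁ j t - a₁ * solD a₀ a₁ j t) t := by
  have h := (entryCLM 1 j).hasFDerivAt.comp_hasDerivAt t (hasDerivAt_Wmat a₀ a₁ t)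
  have he : entryCLM 1 j (Amat a₀ a₁ * Wmat a₀ a₁ t)
      = -a₀ * sol a₀ a₁ j t - a₁ * solD a₀ a₁ j t := by
    show (Amat a₀ a₁ * Wmat a₀ a₁ t) 1 j = _
    simp [Amat, Matrix.mul_apply, Fin.sum_univ_two, sol, solD]
    ring
  replace h := h.congr_deriv he
  exact h

lemma deriv_sol (a₀ a₁ : ℝ) (j : Fin 2) : deriv (sol a₀ a₁ j) = solD a₀ a₁ j :=
  funext fun t => (hasDerivAt_sol a₀ a₁ j t).deriv

lemma contDiff_sol (a₀ a₁ : ℝ) (j : Fin 2) : ContDiff ℝ (⊤ : ℕ∞) (sol a₀ a₁ j) := by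
  have hA : AnalyticOnNhd ℝ (sol a₀ a₁ j) Set.univ := by
    intro t _
    have h1 : AnalyticAt ℝ (fun t : ℝ => t • Amat a₀ a₁) t := by
      exact ((1 : ℝ →L[ℝ] ℝ).smulRight (Amat a₀ a₁)).analyticAt t
    have h2 : AnalyticAt ℝ exp (t • Amat a₀ a₁) := exp_analytic _
    have h3 : AnalyticAt ℝ (entryCLM 0 j) (exp (t • Amat a₀ a₁)) :=
      (entryCLM 0 j).analyticAt _
    have h23 : AnalyticAt ℝ (fun t : ℝ => exp (t • Amat a₀ a₁)) t :=
      AnalyticAt.comp (f := fun t : ℝ => t • Amat a₀ a₁) h2 h1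
    exact AnalyticAt.comp (f := fun t : ℝ => exp (t • Amat a₀ a₁)) h3 h23
  exact hA.contDiff

lemma sol_ode (a₀ a₁ : ℝ) (j : Fin 2) (x : ℝ) :
    iteratedDeriv 2 (sol a₀ a₁ j) x + a₁ * deriv (sol a₀ a₁ j) x + a₀ * sol a₀ a₁ j x = 0 := by
  have h2 : iteratedDeriv 2 (sol a₀ a₁ j) = deriv (deriv (sol a₀ a₁ j)) := by
    rw [iteratedDeriv_succ, iteratedDeriv_one]
  rw [h2, deriv_sol]
  rw [(hasDerivAt_solD a₀ a₁ j x).deriv]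
  ring

lemma Wmat_zero (a₀ a₁ : ℝ) : Wmat a₀ a₁ 0 = 1 := by
  simp [Wmat, exp_zero]

lemma key (a₀ a₁ b₀ b₁ β₁ β₂ : ℝ) (u v : ℝ → ℝ) (hu : ContDiff ℝ (⊤ : ℕ∞) u) (hv : ContDiff ℝ (⊤ : ℕ∞) v)
    (hue : ∀ x : ℝ, iteratedDeriv 2 u x + a₁ * deriv u x + a₀ * u x = 0)
    (hve : ∀ x : ℝ, iteratedDeriv 2 v x + b₁ * deriv v x + b₀ * v x = 0) (x : ℝ) :
    iteratedDeriv 2 (Gop β₁ β₂ u v) x + b₁ * deriv (Gop β₁ β₂ u v) x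
      + b₀ * Gop β₁ β₂ u v x
    = (-a₁ ^ 3 + 2 * a₀ * a₁ - β₁ * a₁ + a₁ ^ 2 * b₁ - a₀ * b₁ + β₁ * b₁ - a₁ * b₀) * deriv u x
      + (-(a₀ * a₁ ^ 2) + a₀ ^ 2 - β₁ * a₀ + a₀ * a₁ * b₁ - a₀ * b₀ + β₁ * b₀) * u x := by
  have hdu : Differentiable ℝ u := hu.differentiable (by simp)
  have hdv : Differentiable ℝ v := hv.differentiable (by simp)
  have hdu1 : Differentiable ℝ (deriv u) :=
    ((contDiff_infty_iff_deriv.mp (hu.of_le (by simp))).2).differentiable (by simp)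
  have hdv1 : Differentiable ℝ (deriv v) :=
    ((contDiff_infty_iff_deriv.mp (hv.of_le (by simp))).2).differentiable (by simp)
  have hiu : iteratedDeriv 2 u = deriv (deriv u) := by
    rw [iteratedDeriv_succ, iteratedDeriv_one]
  have hiv : iteratedDeriv 2 v = deriv (deriv v) := by
    rw [iteratedDeriv_succ, iteratedDeriv_one]
  have hstepu : ∀ y : ℝ, deriv (deriv u) y = -(a₁ * deriv u y) - a₀ * u y := by
    intro y; have := hue y; rw [hiu] at this; linarith
  have hstepv : ∀ y : ℝ, deriv (deriv v) y = -(b₁ * deriv v y) - b₀ * v y := by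
    intro y; have := hve y; rw [hiv] at this; linarith
  have hG : Gop β₁ β₂ u v = fun y => (β₁ - a₀) * u y - a₁ * deriv u y + β₂ * v y := by
    funext y
    have := hue y
    rw [hiu] at this
    simp only [Gop, hiu]
    linarith
  have hG' : deriv (Gop β₁ β₂ u v)
      = fun y => (β₁ - a₀ + a₁ ^ 2) * deriv u y + a₀ * a₁ * u y + β₂ * deriv v y := by
    funext y
    rw [hG]
    have h : HasDerivAt (fun y => (β₁ - a₀) * u y - a₁ * deriv u y + β₂ * v y)
        (((β₁ - a₀) * deriv u y - a₁ * deriv (deriv u) y) + β₂ * deriv v y) y :=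
      ((((hdu y).hasDerivAt).const_mul _).sub (((hdu1 y).hasDerivAt).const_mul _)).add
        (((hdv y).hasDerivAt).const_mul _)
    rw [h.deriv, hstepu y]
    ring
  have hG'' : deriv (deriv (Gop β₁ β₂ u v)) x
      = (β₁ - a₀ + a₁ ^ 2) * (-(a₁ * deriv u x) - a₀ * u x) + a₀ * a₁ * deriv u x
        + β₂ * (-(b₁ * deriv v x) - b₀ * v x) := by
    rw [hG']
    have h : HasDerivAt
        (fun y => (β₁ - a₀ + a₁ ^ 2) * deriv u y + a₀ * a₁ * u y + β₂ * deriv v y)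
        (((β₁ - a₀ + a₁ ^ 2) * deriv (deriv u) x + a₀ * a₁ * deriv u x)
          + β₂ * deriv (deriv v) x) x :=
      ((((hdu1 x).hasDerivAt).const_mul _).add (((hdu x).hasDerivAt).const_mul _)).add
        (((hdv1 x).hasDerivAt).const_mul _)
    rw [h.deriv, hstepu x, hstepv x]
  have hiG : iteratedDeriv 2 (Gop β₁ β₂ u v) = deriv (deriv (Gop β₁ β₂ u v)) := by
    rw [iteratedDeriv_succ, iteratedDeriv_one]
  rw [hiG, hG'', hG']
  conv_lhs => rw [hG]
  ring

/-- The invariance condition for the second equation holds for all smooth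
solutions `u, v` of the two linear ODEs if and only if the polynomial conditions
(E4) and (E5) hold. -/
theorem invariance_second_equation_iff
    (a₀ a₁ b₀ b₁ β₁ β₂ : ℝ) :
    (∀ u v : ℝ → ℝ, ContDiff ℝ (⊤ : ℕ∞) u → ContDiff ℝ (⊤ : ℕ∞) v →
      (∀ x : ℝ, iteratedDeriv 2 u x + a₁ * deriv u x + a₀ * u x = 0) →
      (∀ x : ℝ, iteratedDeriv 2 v x + b₁ * deriv v x + b₀ * v x = 0) →
      ∀ x : ℝ, iteratedDeriv 2 (Gop β₁ β₂ u v) x + b₁ * deriv (Gop β₁ β₂ u v) x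
        + b₀ * Gop β₁ β₂ u v x = 0) ↔
    (-a₁ ^ 3 + 2 * a₀ * a₁ - β₁ * a₁ + a₁ ^ 2 * b₁ - a₀ * b₁ + β₁ * b₁ - a₁ * b₀ = 0 ∧
      -(a₀ * a₁ ^ 2) + a₀ ^ 2 - β₁ * a₀ + a₀ * a₁ * b₁ - a₀ * b₀ + β₁ * b₀ = 0) := by
  constructor
  · intro h
    have hv0 : ContDiff ℝ (⊤ : ℕ∞) (fun _ : ℝ => (0 : ℝ)) := contDiff_const
    have hve0 : ∀ x : ℝ, iteratedDeriv 2 (fun _ : ℝ => (0 : ℝ)) x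
        + b₁ * deriv (fun _ : ℝ => (0 : ℝ)) x + b₀ * (fun _ : ℝ => (0 : ℝ)) x = 0 := by
      intro x
      simp [iteratedDeriv_succ, iteratedDeriv_one]
    have hkey : ∀ j : Fin 2,
        (-a₁ ^ 3 + 2 * a₀ * a₁ - β₁ * a₁ + a₁ ^ 2 * b₁ - a₀ * b₁ + β₁ * b₁ - a₁ * b₀)
            * deriv (sol a₀ a₁ j) 0
          + (-(a₀ * a₁ ^ 2) + a₀ ^ 2 - β₁ * a₀ + a₀ * a₁ * b₁ - a₀ * b₀ + β₁ * b₀)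
            * sol a₀ a₁ j 0 = 0 := by
      intro j
      have h1 := h (sol a₀ a₁ j) (fun _ => 0) (contDiff_sol a₀ a₁ j) hv0
        (sol_ode a₀ a₁ j) hve0 0
      have h2 := key a₀ a₁ b₀ b₁ β₁ β₂ (sol a₀ a₁ j) (fun _ => 0)
        (contDiff_sol a₀ a₁ j) hv0 (sol_ode a₀ a₁ j) hve0 0
      rw [h1] at h2
      linarith
    have h00 : sol a₀ a₁ 0 0 = 1 := by
      simp [sol, Wmat_zero, Matrix.one_apply]
    have h01 : sol a₀ a₁ 1 0 = 0 := by
      simp [sol, Wmat_zero, Matrix.one_apply]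
    have h10 : deriv (sol a₀ a₁ 0) 0 = 0 := by
      rw [deriv_sol]
      simp [solD, Wmat_zero, Matrix.one_apply]
    have h11 : deriv (sol a₀ a₁ 1) 0 = 1 := by
      rw [deriv_sol]
      simp [solD, Wmat_zero, Matrix.one_apply]
    constructor
    · have := hkey 1
      rw [h01, h11] at this
      linarith
    · have := hkey 0
      rw [h00, h10] at this
      linarith
  · rintro ⟨h4, h5⟩ u v hu hv hue hve x
    rw [key a₀ a₁ b₀ b₁ β₁ β₂ u v hu hv hue hve x, h4, h5]
    ring
end

section
/- Let α₁, α₂, a₀, a₁, b₀, b₁ be real constants with Δ₂ = b₁² − 4b₀ > 0, and set λ₊ = (−b₁ + √Δ₂)/2 and λ₋ = (−b₁ − √Δ₂)/2. Define γ₁ = α₁a₀b₁² − α₁a₁b₁³ − 2α₂a₁b₁ + α₁b₁⁴ + 2α₂b₁² + 2α₂a₀, γ₂ = −4α₂b₀ + α₂a₀ + 8α₁b₀² − 16α₁b₀b₁² − 2α₁a₀b₀ + 4α₁b₁⁴ + 2α₂b₁² + 6α₁a₁b₀b₁ − 2α₁a₁b₁³ − α₂a₁b₁ + α₁a₀b₁²,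 and γ₃ = −4α₁b₁³ − 2α₂b₁ + α₂a₁ + 2α₁a₁b₁² − 2α₁a₁b₀ − α₁a₀b₁ + 8α₁b₀b₁. Then the following are equivalent: (i) for all infinitely differentiable u : ℝ → ℝ with u''(x) + a₁u'(x) + a₀u(x) = 0 on ℝ and all v of the form v(x) = C₁e^{λ₊x} + C₂e^{λ₋x} with real constants C₁, C₂, the function F(x) = u'''(x) + α₁(v'(x)² + v(x)v''(x)) + α₂v(x)² satisfies F''(x) + a₁F'(x) + a₀F(x) = 0 for all x ∈ ℝ; (ii) γ₁ = 0, γ₂ = 0, and γ₃ = 0. -/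
open scoped ContDiff

private lemma expc_hasDerivAt (c x : ℝ) :
    HasDerivAt (fun y : ℝ => Real.exp (c * y)) (c * Real.exp (c * x)) x := by
  have h : HasDerivAt (fun y : ℝ => c * y) (c * 1) x := (hasDerivAt_id x).const_mul c
  simpa [mul_comm] using h.exp

private noncomputable def Wf (A B D r s t : ℝ) : ℝ → ℝ := fun x =>
  A * Real.exp (r * x) + B * Real.exp (s * x) + D * Real.exp (t * x)

private lemma Wf_hasDerivAt (A B D r s t x : ℝ) :
    HasDerivAt (Wf A B D r s t) (Wf (A * r) (B * s) (D * t) r s t x) x := by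
  have h := (((expc_hasDerivAt r x).const_mul A).add ((expc_hasDerivAt s x).const_mul B)).add
    ((expc_hasDerivAt t x).const_mul D)
  refine HasDerivAt.congr_deriv h ?_
  simp only [Wf]; ring

private lemma Wf_deriv (A B D r s t : ℝ) :
    deriv (Wf A B D r s t) = Wf (A * r) (B * s) (D * t) r s t :=
  funext fun x => (Wf_hasDerivAt A B D r s t x).deriv

private lemma Wf_iter2 (A B D r s t : ℝ) :
    iteratedDeriv 2 (Wf A B D r s t) = Wf (A * r ^ 2) (B * s ^ 2) (D * t ^ 2) r s t := by
  rw [iteratedDeriv_succ, iteratedDeriv_one, Wf_deriv, Wf_deriv]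
  funext x; simp only [Wf]; ring

private lemma iter_contDiff {u : ℝ → ℝ} (hu : ContDiff ℝ ∞ u) (k : ℕ) :
    ContDiff ℝ ∞ (iteratedDeriv k u) := by
  rw [iteratedDeriv_eq_iterate]; exact hu.iterate_deriv k

private lemma iter_hasDerivAt {u : ℝ → ℝ} (hu : ContDiff ℝ ∞ u) (k : ℕ) (x : ℝ) :
    HasDerivAt (iteratedDeriv k u) (iteratedDeriv (k + 1) u x) x := by
  rw [iteratedDeriv_succ]
  exact (((iter_contDiff hu k).differentiable (by simp)) x).hasDerivAt

private lemma ode_iter {u : ℝ → ℝ} (hu : ContDiff ℝ ∞ u) (a₀ a₁ : ℝ)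
    (h : ∀ x, iteratedDeriv 2 u x + a₁ * deriv u x + a₀ * u x = 0) :
    ∀ n, ∀ x : ℝ, iteratedDeriv (n + 2) u x + a₁ * iteratedDeriv (n + 1) u x
      + a₀ * iteratedDeriv n u x = 0 := by
  intro n
  induction n with
  | zero => simpa [iteratedDeriv_one, iteratedDeriv_zero] using h
  | succ n ih =>
    intro x
    have hg : (fun x : ℝ => iteratedDeriv (n + 2) u x + a₁ * iteratedDeriv (n + 1) u x
        + a₀ * iteratedDeriv n u x) = fun _ => (0 : ℝ) := funext ih
    have hda := (((iter_hasDerivAt hu (n + 2) x).add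
      ((iter_hasDerivAt hu (n + 1) x).const_mul a₁)).add
      ((iter_hasDerivAt hu n x).const_mul a₀))
    have hg' : ((iteratedDeriv (n + 2) u + fun y => a₁ * iteratedDeriv (n + 1) u y)
        + fun y => a₀ * iteratedDeriv n u y) = fun _ => (0 : ℝ) := hg
    rw [hg'] at hda
    have h0 := hda.unique (hasDerivAt_const x 0)
    have : iteratedDeriv (n + 2 + 1) u x + a₁ * iteratedDeriv (n + 1 + 1) u x
        + a₀ * iteratedDeriv (n + 1) u x = 0 := h0
    simpa [show n + 2 + 1 = n + 1 + 2 from rfl] using this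

private lemma Lop_formula (α₁ α₂ a₀ a₁ p q C₁ C₂ : ℝ) (u : ℝ → ℝ) (hu : ContDiff ℝ ∞ u)
    (h : ∀ x, iteratedDeriv 2 u x + a₁ * deriv u x + a₀ * u x = 0) (x : ℝ) :
    iteratedDeriv 2 (Fop α₁ α₂ u (fun y => C₁ * Real.exp (p * y) + C₂ * Real.exp (q * y))) x
      + a₁ * deriv (Fop α₁ α₂ u (fun y => C₁ * Real.exp (p * y) + C₂ * Real.exp (q * y))) x
      + a₀ * Fop α₁ α₂ u (fun y => C₁ * Real.exp (p * y) + C₂ * Real.exp (q * y)) x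
    = C₁ ^ 2 * (2 * α₁ * p ^ 2 + α₂) * ((2 * p) ^ 2 + a₁ * (2 * p) + a₀) * Real.exp (2 * p * x)
      + C₂ ^ 2 * (2 * α₁ * q ^ 2 + α₂) * ((2 * q) ^ 2 + a₁ * (2 * q) + a₀) * Real.exp (2 * q * x)
      + C₁ * C₂ * (α₁ * (p + q) ^ 2 + 2 * α₂) * ((p + q) ^ 2 + a₁ * (p + q) + a₀)
          * Real.exp ((p + q) * x) := by
  have hvW : (fun y => C₁ * Real.exp (p * y) + C₂ * Real.exp (q * y)) = Wf C₁ C₂ 0 p q 0 := by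
    funext y; simp [Wf]
  set A := C₁ ^ 2 * (2 * α₁ * p ^ 2 + α₂) with hA
  set B := C₂ ^ 2 * (2 * α₁ * q ^ 2 + α₂) with hB
  set D := C₁ * C₂ * (α₁ * (p + q) ^ 2 + 2 * α₂) with hD
  have hF : Fop α₁ α₂ u (fun y => C₁ * Real.exp (p * y) + C₂ * Real.exp (q * y))
      = fun x => iteratedDeriv 3 u x + Wf A B D (2 * p) (2 * q) (p + q) x := by
    funext y
    unfold Fop
    rw [hvW, Wf_deriv, Wf_iter2]
    have e1 : Real.exp (2 * p * y) = Real.exp (p * y) * Real.exp (p * y) := by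
      rw [← Real.exp_add]; congr 1; ring
    have e2 : Real.exp (2 * q * y) = Real.exp (q * y) * Real.exp (q * y) := by
      rw [← Real.exp_add]; congr 1; ring
    have e3 : Real.exp ((p + q) * y) = Real.exp (p * y) * Real.exp (q * y) := by
      rw [← Real.exp_add]; congr 1; ring
    simp only [Wf, hA, hB, hD, e1, e2, e3]
    ring
  have hd1 : deriv (fun x => iteratedDeriv 3 u x + Wf A B D (2 * p) (2 * q) (p + q) x)
      = fun x => iteratedDeriv 4 u x
        + Wf (A * (2 * p)) (B * (2 * q)) (D * (p + q)) (2 * p) (2 * q) (p + q) x :=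
    funext fun y => ((iter_hasDerivAt hu 3 y).add (Wf_hasDerivAt A B D _ _ _ y)).deriv
  have hd2 : deriv (fun x => iteratedDeriv 4 u x
        + Wf (A * (2 * p)) (B * (2 * q)) (D * (p + q)) (2 * p) (2 * q) (p + q) x)
      = fun x => iteratedDeriv 5 u x
        + Wf (A * (2 * p) * (2 * p)) (B * (2 * q) * (2 * q)) (D * (p + q) * (p + q))
            (2 * p) (2 * q) (p + q) x :=
    funext fun y => ((iter_hasDerivAt hu 4 y).add (Wf_hasDerivAt _ _ _ _ _ _ y)).deriv
  rw [hF, iteratedDeriv_succ, iteratedDeriv_one, hd1, hd2]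
  have hode := ode_iter hu a₀ a₁ h 3 x
  simp only [Wf]
  nlinarith [hode]

/-- Assume `Δ₂ = b₁² − 4 b₀ > 0` and set `λ± = (−b₁ ± √Δ₂)/2`. Then the
invariance condition for the first equation, for all smooth `u` with
`u'' + a₁ u' + a₀ u = 0` and all `v = C₁ e^{λ₊ x} + C₂ e^{λ₋ x}`, holds if and only if
`γ₁ = γ₂ = γ₃ = 0`. -/
theorem invariance_first_equation_iff_gammas
    (α₁ α₂ a₀ a₁ b₀ b₁ : ℝ) (hΔ : b₁ ^ 2 - 4 * b₀ > 0) :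
    (∀ u : ℝ → ℝ, ContDiff ℝ (⊤ : ℕ∞) u →
      (∀ x : ℝ, iteratedDeriv 2 u x + a₁ * deriv u x + a₀ * u x = 0) →
      ∀ C₁ C₂ : ℝ,
      ∀ x : ℝ,
        iteratedDeriv 2
            (Fop α₁ α₂ u (fun y =>
              C₁ * Real.exp ((-b₁ + Real.sqrt (b₁ ^ 2 - 4 * b₀)) / 2 * y)
                + C₂ * Real.exp ((-b₁ - Real.sqrt (b₁ ^ 2 - 4 * b₀)) / 2 * y))) x
          + a₁ * deriv
            (Fop α₁ α₂ u (fun y =>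
              C₁ * Real.exp ((-b₁ + Real.sqrt (b₁ ^ 2 - 4 * b₀)) / 2 * y)
                + C₂ * Real.exp ((-b₁ - Real.sqrt (b₁ ^ 2 - 4 * b₀)) / 2 * y))) x
          + a₀ * Fop α₁ α₂ u (fun y =>
              C₁ * Real.exp ((-b₁ + Real.sqrt (b₁ ^ 2 - 4 * b₀)) / 2 * y)
                + C₂ * Real.exp ((-b₁ - Real.sqrt (b₁ ^ 2 - 4 * b₀)) / 2 * y)) x = 0) ↔
    (α₁ * a₀ * b₁ ^ 2 - α₁ * a₁ * b₁ ^ 3 - 2 * α₂ * a₁ * b₁ + α₁ * b₁ ^ 4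
        + 2 * α₂ * b₁ ^ 2 + 2 * α₂ * a₀ = 0 ∧
      -4 * α₂ * b₀ + α₂ * a₀ + 8 * α₁ * b₀ ^ 2 - 16 * α₁ * b₀ * b₁ ^ 2
        - 2 * α₁ * a₀ * b₀ + 4 * α₁ * b₁ ^ 4 + 2 * α₂ * b₁ ^ 2 + 6 * α₁ * a₁ * b₀ * b₁
        - 2 * α₁ * a₁ * b₁ ^ 3 - α₂ * a₁ * b₁ + α₁ * a₀ * b₁ ^ 2 = 0 ∧
      -4 * α₁ * b₁ ^ 3 - 2 * α₂ * b₁ + α₂ * a₁ + 2 * α₁ * a₁ * b₁ ^ 2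
        - 2 * α₁ * a₁ * b₀ - α₁ * a₀ * b₁ + 8 * α₁ * b₀ * b₁ = 0) := by
  have hs2 : Real.sqrt (b₁ ^ 2 - 4 * b₀) ^ 2 = b₁ ^ 2 - 4 * b₀ := Real.sq_sqrt hΔ.le
  have hspos : 0 < Real.sqrt (b₁ ^ 2 - 4 * b₀) := Real.sqrt_pos.mpr hΔ
  set S := Real.sqrt (b₁ ^ 2 - 4 * b₀) with hS
  constructor
  · intro h
    have hzero : ∀ x : ℝ, iteratedDeriv 2 (fun _ : ℝ => (0 : ℝ)) x
        + a₁ * deriv (fun _ : ℝ => (0 : ℝ)) x + a₀ * (fun _ : ℝ => (0 : ℝ)) x = 0 := by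
      intro x
      have h2 : iteratedDeriv 2 (fun _ : ℝ => (0 : ℝ)) = fun _ => (0 : ℝ) := by
        rw [iteratedDeriv_succ, iteratedDeriv_one]; simp
      simp [h2]
    have key : ∀ C₁ C₂ : ℝ,
        C₁ ^ 2 * (2 * α₁ * ((-b₁ + S) / 2) ^ 2 + α₂)
            * ((2 * ((-b₁ + S) / 2)) ^ 2 + a₁ * (2 * ((-b₁ + S) / 2)) + a₀)
          + C₂ ^ 2 * (2 * α₁ * ((-b₁ - S) / 2) ^ 2 + α₂)
            * ((2 * ((-b₁ - S) / 2)) ^ 2 + a₁ * (2 * ((-b₁ - S) / 2)) + a₀)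
          + C₁ * C₂ * (α₁ * ((-b₁ + S) / 2 + (-b₁ - S) / 2) ^ 2 + 2 * α₂)
            * (((-b₁ + S) / 2 + (-b₁ - S) / 2) ^ 2
              + a₁ * ((-b₁ + S) / 2 + (-b₁ - S) / 2) + a₀) = 0 := by
      intro C₁ C₂
      have h0 := h (fun _ => 0) contDiff_const hzero C₁ C₂ 0
      rw [Lop_formula α₁ α₂ a₀ a₁ ((-b₁ + S) / 2) ((-b₁ - S) / 2) C₁ C₂ (fun _ => 0)
        contDiff_const hzero 0] at h0
      simp only [mul_zero, Real.exp_zero, mul_one] at h0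
      linear_combination h0
    have ep := key 1 0
    have em := key 0 1
    have e0 := key 1 1
    refine ⟨by linear_combination e0 - ep - em, ?_, ?_⟩
    · linear_combination (1 / 2) * ep + (1 / 2) * em
        - (7 / 2 * α₁ * b₁ ^ 2 - 3 / 2 * α₁ * a₁ * b₁ + 1 / 2 * α₁ * a₀ + α₂ - 2 * α₁ * b₀
            + 1 / 2 * α₁ * S ^ 2) * hs2
    · have h3 : S * (-4 * α₁ * b₁ ^ 3 - 2 * α₂ * b₁ + α₂ * a₁ + 2 * α₁ * a₁ * b₁ ^ 2
          - 2 * α₁ * a₁ * b₀ - α₁ * a₀ * b₁ + 8 * α₁ * b₀ * b₁) = 0 := by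
        linear_combination (1 / 2) * ep - (1 / 2) * em
          - ((-2 * α₁ * b₁ + 1 / 2 * α₁ * a₁) * S) * hs2
      rcases mul_eq_zero.mp h3 with h' | h'
      · exact absurd h' hspos.ne'
      · exact h'
  · rintro ⟨g1, g2, g3⟩ u hu hode C₁ C₂ x
    rw [Lop_formula α₁ α₂ a₀ a₁ ((-b₁ + S) / 2) ((-b₁ - S) / 2) C₁ C₂ u (hu.of_le (by simp))
      hode x]
    have ep : (2 * α₁ * ((-b₁ + S) / 2) ^ 2 + α₂)
        * ((2 * ((-b₁ + S) / 2)) ^ 2 + a₁ * (2 * ((-b₁ + S) / 2)) + a₀) = 0 := by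
      linear_combination g2 + S * g3
        + (7 / 2 * α₁ * b₁ ^ 2 - 3 / 2 * α₁ * a₁ * b₁ + 1 / 2 * α₁ * a₀ + α₂ - 2 * α₁ * b₀
            - 2 * α₁ * b₁ * S + 1 / 2 * α₁ * a₁ * S + 1 / 2 * α₁ * S ^ 2) * hs2
    have em : (2 * α₁ * ((-b₁ - S) / 2) ^ 2 + α₂)
        * ((2 * ((-b₁ - S) / 2)) ^ 2 + a₁ * (2 * ((-b₁ - S) / 2)) + a₀) = 0 := by
      linear_combination g2 - S * g3
        + (7 / 2 * α₁ * b₁ ^ 2 - 3 / 2 * α₁ * a₁ * b₁ + 1 / 2 * α₁ * a₀ + α₂ - 2 * α₁ * b₀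
            + 2 * α₁ * b₁ * S - 1 / 2 * α₁ * a₁ * S + 1 / 2 * α₁ * S ^ 2) * hs2
    have e0 : (α₁ * ((-b₁ + S) / 2 + (-b₁ - S) / 2) ^ 2 + 2 * α₂)
        * (((-b₁ + S) / 2 + (-b₁ - S) / 2) ^ 2
          + a₁ * ((-b₁ + S) / 2 + (-b₁ - S) / 2) + a₀) = 0 := by
      linear_combination g1
    linear_combination (C₁ ^ 2 * Real.exp (2 * ((-b₁ + S) / 2) * x)) * ep
      + (C₂ ^ 2 * Real.exp (2 * ((-b₁ - S) / 2) * x)) * em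
      + (C₁ * C₂ * Real.exp (((-b₁ + S) / 2 + (-b₁ - S) / 2) * x)) * e0
end

section
/- Let α₁, α₂, a₀, a₁, b₀, b₁ be real constants satisfying (E1) 7α₁b₁² + α₁a₀ + 2α₂ − 4α₁b₀ − 3α₁a₁b₁ = 0, γ₂ = 0, and γ₃ = 0, where γ₂ = −4α₂b₀ + α₂a₀ + 8α₁b₀² − 16α₁b₀b₁² − 2α₁a₀b₀ + 4α₁b₁⁴ + 2α₂b₁² + 6α₁a₁b₀b₁ − 2α₁a₁b₁³ − α₂a₁b₁ + α₁a₀b₁² and γ₃ = −4α₁b₁³ − 2α₂b₁ + α₂a₁ + 2α₁a₁b₁² − 2α₁a₁b₀ − α₁a₀b₁ + 8α₁b₀b₁. Then γ₁ = 0 automatically holds, where γ₁ = α₁a₀b₁² − α₁a₁b₁³ − 2α₂a₁b₁ + α₁b₁⁴ + 2α₂b₁² + 2α₂a₀. -/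
/-- If (E1) holds and `γ₂ = 0` and `γ₃ = 0`, then `γ₁ = 0` automatically. -/
theorem gamma1_automatic
    (α₁ α₂ a₀ a₁ b₀ b₁ : ℝ)
    (hE1 : 7 * α₁ * b₁ ^ 2 + α₁ * a₀ + 2 * α₂ - 4 * α₁ * b₀ - 3 * α₁ * a₁ * b₁ = 0)
    (hγ2 : -4 * α₂ * b₀ + α₂ * a₀ + 8 * α₁ * b₀ ^ 2 - 16 * α₁ * b₀ * b₁ ^ 2
      - 2 * α₁ * a₀ * b₀ + 4 * α₁ * b₁ ^ 4 + 2 * α₂ * b₁ ^ 2 + 6 * α₁ * a₁ * b₀ * b₁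
      - 2 * α₁ * a₁ * b₁ ^ 3 - α₂ * a₁ * b₁ + α₁ * a₀ * b₁ ^ 2 = 0)
    (hγ3 : -4 * α₁ * b₁ ^ 3 - 2 * α₂ * b₁ + α₂ * a₁ + 2 * α₁ * a₁ * b₁ ^ 2
      - 2 * α₁ * a₁ * b₀ - α₁ * a₀ * b₁ + 8 * α₁ * b₀ * b₁ = 0) :
    α₁ * a₀ * b₁ ^ 2 - α₁ * a₁ * b₁ ^ 3 - 2 * α₂ * a₁ * b₁ + α₁ * b₁ ^ 4
      + 2 * α₂ * b₁ ^ 2 + 2 * α₂ * a₀ = 0 := by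
  linear_combination 2 * hγ2 + (4 * b₀ - b₁ ^ 2) * hE1
end

section
/- Let α₁, α₂, a₀, a₁, b₀, b₁ be real constants satisfying the three conditions (E1) 7α₁b₁² + α₁a₀ + 2α₂ − 4α₁b₀ − 3α₁a₁b₁ = 0, (E2) 12α₁b₁b₀ − α₁a₀b₁ − 4α₁a₁b₀ + 2α₂a₁ − α₁b₁³ − 2α₂b₁ + α₁a₁b₁² = 0, and (E3) 4α₁b₀² + α₂a₀ − α₁b₁²b₀ + α₁a₁b₀b₁ − α₁a₀b₀ − 2α₂b₀ = 0. Then γ₁ = 0, γ₂ = 0, and γ₃ = 0, where γ₁ = α₁a₀b₁² − α₁a₁b₁³ − 2α₂a₁b₁ + α₁b₁⁴ + 2α₂b₁² + 2α₂a₀, γ₂ = −4α₂b₀ + α₂a₀ + 8α₁b₀² − 16α₁b₀b₁² − 2α₁a₀b₀ + 4α₁b₁⁴ + 2α₂b₁² + 6α₁a₁b₀b₁ − 2α₁a₁b₁³ − α₂a₁b₁ + α₁a₀b₁², and γ₃ = −4α₁b₁³ − 2α₂b₁ + α₂a₁ + 2α₁a₁b₁² − 2α₁a₁b₀ − α₁a₀b₁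 + 8α₁b₀b₁. -/
/-- The conditions (E1), (E2), (E3) imply `γ₁ = 0`, `γ₂ = 0`, `γ₃ = 0`. -/
theorem E_conditions_imply_gammas
    (α₁ α₂ a₀ a₁ b₀ b₁ : ℝ)
    (hE1 : 7 * α₁ * b₁ ^ 2 + α₁ * a₀ + 2 * α₂ - 4 * α₁ * b₀ - 3 * α₁ * a₁ * b₁ = 0)
    (hE2 : 12 * α₁ * b₁ * b₀ - α₁ * a₀ * b₁ - 4 * α₁ * a₁ * b₀ + 2 * α₂ * a₁
      - α₁ * b₁ ^ 3 - 2 * α₂ * b₁ + α₁ * a₁ * b₁ ^ 2 = 0)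
    (hE3 : 4 * α₁ * b₀ ^ 2 + α₂ * a₀ - α₁ * b₁ ^ 2 * b₀ + α₁ * a₁ * b₀ * b₁
      - α₁ * a₀ * b₀ - 2 * α₂ * b₀ = 0) :
    (α₁ * a₀ * b₁ ^ 2 - α₁ * a₁ * b₁ ^ 3 - 2 * α₂ * a₁ * b₁ + α₁ * b₁ ^ 4
        + 2 * α₂ * b₁ ^ 2 + 2 * α₂ * a₀ = 0) ∧
    (-4 * α₂ * b₀ + α₂ * a₀ + 8 * α₁ * b₀ ^ 2 - 16 * α₁ * b₀ * b₁ ^ 2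
        - 2 * α₁ * a₀ * b₀ + 4 * α₁ * b₁ ^ 4 + 2 * α₂ * b₁ ^ 2 + 6 * α₁ * a₁ * b₀ * b₁
        - 2 * α₁ * a₁ * b₁ ^ 3 - α₂ * a₁ * b₁ + α₁ * a₀ * b₁ ^ 2 = 0) ∧
    (-4 * α₁ * b₁ ^ 3 - 2 * α₂ * b₁ + α₂ * a₁ + 2 * α₁ * a₁ * b₁ ^ 2
        - 2 * α₁ * a₁ * b₀ - α₁ * a₀ * b₁ + 8 * α₁ * b₀ * b₁ = 0) := by
  refine ⟨?_, ?_, ?_⟩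
  · linear_combination (2 * b₀) * hE1 + (-b₁) * hE2 + 2 * hE3
  · linear_combination (b₁ ^ 2 / 2 - b₀) * hE1 + (-b₁ / 2) * hE2 + hE3
  · linear_combination (-b₁ / 2) * hE1 + (1 / 2 : ℝ) * hE2
end

section
/- Let α₁, β₁, β₂, a₁ be real constants with a₁ ≠ 0, and let C₁, C₂, D₁, D₂ : ℝ → ℝ be differentiable functions. Define u(x,t) = C₁(t) + C₂(t)e^{−a₁x} and v(x,t) = D₁(t) + D₂(t)e^{−a₁x}. Then u and v satisfy the system ∂u/∂t = ∂/∂x(∂²u/∂x² + α₁ v ∂v/∂x) − 2α₁a₁² v² and ∂v/∂t = ∂²u/∂x² + β₁u + β₂v for all (x,t) ∈ ℝ² if and only if for all t ∈ ℝ: C₁'(t) = −2α₁a₁²D₁(t)², C₂'(t) = −a₁³C₂(t) − 3α₁a₁²D₁(t)D₂(t), D₁'(t) = β₁C₁(t) + β₂D₁(t), and D₂'(t) = (a₁² + β₁)C₂(t) + β₂D₂(t). -/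
/-- `u(x, t) = C₁(t) + C₂(t) e^{−a₁ x}`. -/
noncomputable def uSep (a₁ : ℝ) (C₁ C₂ : ℝ → ℝ) (x t : ℝ) : ℝ :=
  C₁ t + C₂ t * Real.exp (-a₁ * x)

/-- `v(x, t) = D₁(t) + D₂(t) e^{−a₁ x}`. -/
noncomputable def vSep (a₁ : ℝ) (D₁ D₂ : ℝ → ℝ) (x t : ℝ) : ℝ :=
  D₁ t + D₂ t * Real.exp (-a₁ * x)

/-!
Every term of both equations is affine in `e^{-a₁x}` with coefficients depending on `t` only:
the quadratic terms `e^{-2a₁x}` coming from `(v v_x)_x` and from `v²` cancel. Since `1` and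
`e^{-a₁x}` are linearly independent for `a₁ ≠ 0`, each equation holds for all `x` iff the two
coefficients agree, which is the ODE system.
-/

open Real

theorem eq_and_eq_of_forall_add_mul_eq {α K : Type*} [Field K] {f : α → K} {x₀ x₁ : α}
    (hf : f x₀ ≠ f x₁) {A B P Q : K} (h : ∀ x, A + B * f x = P + Q * f x) :
    A = P ∧ B = Q := by
  have hB : B = Q := by
    have hdiff : (B - Q) * (f x₀ - f x₁) = 0 := by linear_combination h x₀ - h x₁
    simpa [sub_eq_zero, hf] using hdiff
  exact ⟨by linear_combination h x₀ - f x₀ * hB, hB⟩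

theorem forall_add_mul_exp_eq_iff {a : ℝ} (ha : a ≠ 0) {A B P Q : ℝ} :
    (∀ x, A + B * exp (-a * x) = P + Q * exp (-a * x)) ↔ A = P ∧ B = Q := by
  refine ⟨eq_and_eq_of_forall_add_mul_eq (x₀ := 0) (x₁ := 1) ?_, ?_⟩
  · simpa [eq_comm (a := (1 : ℝ))] using ha
  · rintro ⟨rfl, rfl⟩ x
    rfl

theorem hasDerivAt_exp_neg_mul (a x : ℝ) :
    HasDerivAt (fun y => exp (-a * y)) (-a * exp (-a * x)) x := by
  simpa [mul_comm] using ((hasDerivAt_id x).const_mul (-a)).exp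

section SeparatedAnsatz

variable (a : ℝ) (C₁ C₂ : ℝ → ℝ) (t : ℝ)

theorem deriv_vSep_space :
    deriv (fun z => vSep a C₁ C₂ z t) = fun z => -a * C₂ t * exp (-a * z) := by
  funext z
  exact (((hasDerivAt_exp_neg_mul a z).const_mul (C₂ t)).const_add (C₁ t)).deriv.trans (by ring)

theorem iteratedDeriv_two_uSep_space :
    iteratedDeriv 2 (fun z => uSep a C₁ C₂ z t) = fun z => a ^ 2 * C₂ t * exp (-a * z) := by
  rw [iteratedDeriv_succ, iteratedDeriv_one]
  funext z
  rw [show (fun z => uSep a C₁ C₂ z t) = fun z => vSep a C₁ C₂ z t from rfl, deriv_vSep_space,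
    ((hasDerivAt_exp_neg_mul a z).const_mul (-a * C₂ t)).deriv]
  ring

variable {C₁ C₂} in
theorem deriv_uSep_time (hC₁ : Differentiable ℝ C₁) (hC₂ : Differentiable ℝ C₂) (x : ℝ) :
    deriv (fun s => uSep a C₁ C₂ x s) t = deriv C₁ t + deriv C₂ t * exp (-a * x) :=
  ((hC₁ t).hasDerivAt.add ((hC₂ t).hasDerivAt.mul_const _)).deriv

variable {C₁ C₂} in
theorem deriv_vSep_time (hC₁ : Differentiable ℝ C₁) (hC₂ : Differentiable ℝ C₂) (x : ℝ) :
    deriv (fun s => vSep a C₁ C₂ x s) t = deriv C₁ t + deriv C₂ t * exp (-a * x) :=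
  deriv_uSep_time a t hC₁ hC₂ x

end SeparatedAnsatz

theorem deriv_flux_sub_sq_vSep_eq (α₁ a : ℝ) (C₁ C₂ D₁ D₂ : ℝ → ℝ) (x t : ℝ) :
    deriv (fun y => iteratedDeriv 2 (fun z => uSep a C₁ C₂ z t) y
        + α₁ * vSep a D₁ D₂ y t * deriv (fun z => vSep a D₁ D₂ z t) y) x
      - 2 * α₁ * a ^ 2 * (vSep a D₁ D₂ x t) ^ 2
      = -2 * α₁ * a ^ 2 * (D₁ t) ^ 2
        + (-a ^ 3 * C₂ t - 3 * α₁ * a ^ 2 * D₁ t * D₂ t) * exp (-a * x) := by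
  have hE := hasDerivAt_exp_neg_mul a x
  have hflux : HasDerivAt (fun y => a ^ 2 * C₂ t * exp (-a * y)
      + α₁ * vSep a D₁ D₂ y t * (-a * D₂ t * exp (-a * y))) _ x :=
    (hE.const_mul _).add (((hE.const_mul (D₂ t)).const_add (D₁ t)).const_mul α₁ |>.mul
      (hE.const_mul _))
  simp only [iteratedDeriv_two_uSep_space, deriv_vSep_space]
  rw [hflux.deriv]
  unfold vSep
  ring

theorem iteratedDeriv_two_uSep_add_linear_eq (β₁ β₂ a : ℝ) (C₁ C₂ D₁ D₂ : ℝ → ℝ) (x t : ℝ) :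
    iteratedDeriv 2 (fun z => uSep a C₁ C₂ z t) x + β₁ * uSep a C₁ C₂ x t + β₂ * vSep a D₁ D₂ x t
      = (β₁ * C₁ t + β₂ * D₁ t) + ((a ^ 2 + β₁) * C₂ t + β₂ * D₂ t) * exp (-a * x) := by
  rw [iteratedDeriv_two_uSep_space]
  unfold uSep vSep
  ring

/-- With `u(x,t) = C₁(t) + C₂(t) e^{−a₁ x}` and
`v(x,t) = D₁(t) + D₂(t) e^{−a₁ x}`, the pair `(u, v)` solves the system
`u_t = (u_{xx} + α₁ v v_x)_x − 2 α₁ a₁² v²`, `v_t = u_{xx} + β₁ u + β₂ v` if and only if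
the coefficient functions solve the corresponding system of ODEs. -/
theorem separated_solution_iff_ODE_system
    (α₁ β₁ β₂ a₁ : ℝ) (ha₁ : a₁ ≠ 0)
    (C₁ C₂ D₁ D₂ : ℝ → ℝ)
    (hC₁ : Differentiable ℝ C₁) (hC₂ : Differentiable ℝ C₂)
    (hD₁ : Differentiable ℝ D₁) (hD₂ : Differentiable ℝ D₂) :
    ((∀ x t : ℝ,
        deriv (fun s => uSep a₁ C₁ C₂ x s) t
          = deriv (fun y => iteratedDeriv 2 (fun z => uSep a₁ C₁ C₂ z t) y
              + α₁ * vSep a₁ D₁ D₂ y t * deriv (fun z => vSep a₁ D₁ D₂ z t) y) x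
            - 2 * α₁ * a₁ ^ 2 * (vSep a₁ D₁ D₂ x t) ^ 2) ∧
      (∀ x t : ℝ,
        deriv (fun s => vSep a₁ D₁ D₂ x s) t
          = iteratedDeriv 2 (fun z => uSep a₁ C₁ C₂ z t) x
            + β₁ * uSep a₁ C₁ C₂ x t + β₂ * vSep a₁ D₁ D₂ x t)) ↔
    (∀ t : ℝ,
      deriv C₁ t = -2 * α₁ * a₁ ^ 2 * (D₁ t) ^ 2 ∧
      deriv C₂ t = -a₁ ^ 3 * C₂ t - 3 * α₁ * a₁ ^ 2 * D₁ t * D₂ t ∧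
      deriv D₁ t = β₁ * C₁ t + β₂ * D₁ t ∧
      deriv D₂ t = (a₁ ^ 2 + β₁) * C₂ t + β₂ * D₂ t) := by
  simp only [deriv_uSep_time _ _ hC₁ hC₂, deriv_vSep_time _ _ hD₁ hD₂, deriv_flux_sub_sq_vSep_eq,
    iteratedDeriv_two_uSep_add_linear_eq]
  refine (and_congr forall_comm forall_comm).trans ?_
  simp only [forall_add_mul_exp_eq_iff ha₁, ← forall_and, and_assoc]
end

section
/- Let α₁, β₁, β₂, a₁, c, d be real constants with a₁³ + β₂ ≠ 0. Define u(x,t) = c·e^{−a₁x − a₁³t} and v(x,t) = d·e^{−a₁x + β₂t} − (c(a₁² + β₁)/(a₁³ + β₂))·e^{−a₁x − a₁³t}. Then u and v satisfy the system ∂u/∂t = ∂/∂x(∂²u/∂x² + α₁ v ∂v/∂x) − 2α₁a₁² v² and ∂v/∂t = ∂²u/∂x² + β₁u + β₂v for all (x,t) ∈ ℝ². -/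
/-- `u(x, t) = c e^{−a₁ x − a₁³ t}`. -/
noncomputable def uExact (a₁ c : ℝ) (x t : ℝ) : ℝ :=
  c * Real.exp (-a₁ * x - a₁ ^ 3 * t)

/-- `v(x, t) = d e^{−a₁ x + β₂ t} − (c (a₁² + β₁) / (a₁³ + β₂)) e^{−a₁ x − a₁³ t}`. -/
noncomputable def vExact (a₁ β₁ β₂ c d : ℝ) (x t : ℝ) : ℝ :=
  d * Real.exp (-a₁ * x + β₂ * t)
    - c * (a₁ ^ 2 + β₁) / (a₁ ^ 3 + β₂) * Real.exp (-a₁ * x - a₁ ^ 3 * t)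

/-! As functions of `x`, both `u` and `v` lie in the span of `e^{−a₁ x}`, the eigenspace of
`d/dx` for the eigenvalue `k = −a₁`. On that span `u_xx = k² u` and
`(u_xx + α₁ v v_x)_x = k³ u + 2 α₁ k² v²`, so the quadratic source term `−2 α₁ a₁² v²` cancels
exactly and the first equation reduces to `u_t = −a₁³ u`. The second equation is linear; comparing
coefficients of `e^{−a₁ x − a₁³ t}` it says `(a₁³ + β₂) K = c (a₁² + β₁)`, which is how the
coefficient `K = c (a₁² + β₁) / (a₁³ + β₂)` of `v` is chosen. -/

open Real

theorem hasDerivAt_const_mul_exp_affine (A k b x : ℝ) :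
    HasDerivAt (fun z => A * exp (k * z + b)) (k * (A * exp (k * x + b))) x :=
  ((((hasDerivAt_id' x).const_mul k).add_const b).exp.const_mul A).congr_deriv (by ring)

section ExponentialEigenfunction

variable {f g : ℝ → ℝ} {k : ℝ}

theorem deriv_eq_const_mul_of_hasDerivAt (hf : ∀ x, HasDerivAt f (k * f x) x) :
    deriv f = fun x => k * f x :=
  funext fun x => (hf x).deriv

theorem iteratedDeriv_two_eq_sq_mul_of_hasDerivAt (hf : ∀ x, HasDerivAt f (k * f x) x) :
    iteratedDeriv 2 f = fun x => k ^ 2 * f x := by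
  rw [iteratedDeriv_succ, iteratedDeriv_one, deriv_eq_const_mul_of_hasDerivAt hf]
  funext x
  rw [((hf x).const_mul k).deriv]
  ring

theorem deriv_iteratedDeriv_two_add_mul_self_deriv (hf : ∀ x, HasDerivAt f (k * f x) x)
    (hg : ∀ x, HasDerivAt g (k * g x) x) (α x : ℝ) :
    deriv (fun y => iteratedDeriv 2 f y + α * g y * deriv g y) x
      = k ^ 3 * f x + 2 * α * k ^ 2 * g x ^ 2 := by
  simp only [iteratedDeriv_two_eq_sq_mul_of_hasDerivAt hf, deriv_eq_const_mul_of_hasDerivAt hg]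
  rw [(((hf x).const_mul (k ^ 2)).fun_add (((hg x).const_mul α).fun_mul ((hg x).const_mul k))).deriv]
  ring

end ExponentialEigenfunction

section ExactSolution

variable (β₁ β₂ a₁ c d : ℝ)

theorem hasDerivAt_uExact_space (t x : ℝ) :
    HasDerivAt (fun z => uExact a₁ c z t) (-a₁ * uExact a₁ c x t) x := by
  have hu : (fun z => uExact a₁ c z t) = fun z => c * exp (-a₁ * z + -(a₁ ^ 3 * t)) := by
    simp only [uExact, sub_eq_add_neg]
  rw [hu]
  exact hasDerivAt_const_mul_exp_affine c (-a₁) _ x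

theorem hasDerivAt_vExact_space (t x : ℝ) :
    HasDerivAt (fun z => vExact a₁ β₁ β₂ c d z t) (-a₁ * vExact a₁ β₁ β₂ c d x t) x := by
  have hv : (fun z => vExact a₁ β₁ β₂ c d z t) = fun z => d * exp (-a₁ * z + β₂ * t)
      - c * (a₁ ^ 2 + β₁) / (a₁ ^ 3 + β₂) * exp (-a₁ * z + -(a₁ ^ 3 * t)) := by
    simp only [vExact, sub_eq_add_neg]
  rw [hv]
  exact ((hasDerivAt_const_mul_exp_affine _ _ _ x).fun_sub
    (hasDerivAt_const_mul_exp_affine _ _ _ x)).congr_deriv (by simp only [vExact]; ring_nf)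

theorem hasDerivAt_uExact_time (x t : ℝ) :
    HasDerivAt (fun s => uExact a₁ c x s) (-a₁ ^ 3 * uExact a₁ c x t) t := by
  have hu : (fun s => uExact a₁ c x s) = fun s => c * exp (-a₁ ^ 3 * s + -a₁ * x) := by
    funext s; simp only [uExact]; ring_nf
  rw [hu]
  exact (hasDerivAt_const_mul_exp_affine c _ _ t).congr_deriv (by simp only [uExact]; ring_nf)

theorem hasDerivAt_vExact_time (x t : ℝ) :
    HasDerivAt (fun s => vExact a₁ β₁ β₂ c d x s)
      (β₂ * (d * exp (-a₁ * x + β₂ * t))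
        + a₁ ^ 3 * (c * (a₁ ^ 2 + β₁) / (a₁ ^ 3 + β₂) * exp (-a₁ * x - a₁ ^ 3 * t))) t := by
  have hv : (fun s => vExact a₁ β₁ β₂ c d x s) = fun s => d * exp (β₂ * s + -a₁ * x)
      - c * (a₁ ^ 2 + β₁) / (a₁ ^ 3 + β₂) * exp (-a₁ ^ 3 * s + -a₁ * x) := by
    funext s; simp only [vExact]; ring_nf
  rw [hv]
  exact ((hasDerivAt_const_mul_exp_affine _ _ _ t).fun_sub
    (hasDerivAt_const_mul_exp_affine _ _ _ t)).congr_deriv (by ring_nf)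

end ExactSolution

/-- With `a₁³ + β₂ ≠ 0`, the pair `(u, v)` given by
`u(x,t) = c e^{−a₁ x − a₁³ t}` and
`v(x,t) = d e^{−a₁ x + β₂ t} − (c (a₁² + β₁)/(a₁³ + β₂)) e^{−a₁ x − a₁³ t}` solves the
system `u_t = (u_{xx} + α₁ v v_x)_x − 2 α₁ a₁² v²`, `v_t = u_{xx} + β₁ u + β₂ v` on `ℝ²`. -/
theorem exact_solution_dissipative_system
    (α₁ β₁ β₂ a₁ c d : ℝ) (h : a₁ ^ 3 + β₂ ≠ 0) :
    (∀ x t : ℝ,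
      deriv (fun s => uExact a₁ c x s) t
        = deriv (fun y => iteratedDeriv 2 (fun z => uExact a₁ c z t) y
            + α₁ * vExact a₁ β₁ β₂ c d y t * deriv (fun z => vExact a₁ β₁ β₂ c d z t) y) x
          - 2 * α₁ * a₁ ^ 2 * (vExact a₁ β₁ β₂ c d x t) ^ 2) ∧
    (∀ x t : ℝ,
      deriv (fun s => vExact a₁ β₁ β₂ c d x s) t
        = iteratedDeriv 2 (fun z => uExact a₁ c z t) x
          + β₁ * uExact a₁ c x t + β₂ * vExact a₁ β₁ β₂ c d x t) := by
  refine ⟨fun x t => ?_, fun x t => ?_⟩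
  · rw [(hasDerivAt_uExact_time a₁ c x t).deriv, deriv_iteratedDeriv_two_add_mul_self_deriv
      (hasDerivAt_uExact_space a₁ c t) (hasDerivAt_vExact_space β₁ β₂ a₁ c d t)]
    ring
  · have hK : (a₁ ^ 3 + β₂) * (c * (a₁ ^ 2 + β₁) / (a₁ ^ 3 + β₂)) = c * (a₁ ^ 2 + β₁) :=
      mul_div_cancel₀ _ h
    rw [(hasDerivAt_vExact_time β₁ β₂ a₁ c d x t).deriv,
      iteratedDeriv_two_eq_sq_mul_of_hasDerivAt (hasDerivAt_uExact_space a₁ c t)]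
    simp only [uExact, vExact]
    linear_combination exp (-a₁ * x - a₁ ^ 3 * t) * hK
end

section
/- Let α₁, β₂, a₁ be real constants with a₁ ≠ 0, and let C, D : ℝ → ℝ be differentiable functions. Define u(x,t) = C(t)cos(a₁x) and v(x,t) = D(t)(1 + sin(a₁x)). Then u and v satisfy the system ∂u/∂t = ∂/∂x(∂u/∂x + α₁ v ∂v/∂x) − a₁²α₁v² − 3α₁ v ∂²v/∂x² and ∂v/∂t = ∂²u/∂x² + a₁²u + β₂v for all (x,t) ∈ ℝ² if and only if C'(t) = −a₁²C(t) and D'(t) = β₂D(t) for all t ∈ ℝ. -/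
/-- `u(x, t) = C(t) cos(a₁ x)`. -/
noncomputable def uTrig (a₁ : ℝ) (C : ℝ → ℝ) (x t : ℝ) : ℝ :=
  C t * Real.cos (a₁ * x)

/-- `v(x, t) = D(t) (1 + sin(a₁ x))`. -/
noncomputable def vTrig (a₁ : ℝ) (D : ℝ → ℝ) (x t : ℝ) : ℝ :=
  D t * (1 + Real.sin (a₁ * x))

/-- With `u(x,t) = C(t) cos(a₁ x)` and `v(x,t) = D(t)(1 + sin(a₁ x))`,
the pair `(u, v)` solves the system
`u_t = (u_x + α₁ v v_x)_x − a₁² α₁ v² − 3 α₁ v v_{xx}`, `v_t = u_{xx} + a₁² u + β₂ v`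
if and only if `C' = −a₁² C` and `D' = β₂ D`. -/
theorem trig_separated_solution_iff_ODEs
    (α₁ β₂ a₁ : ℝ) (ha₁ : a₁ ≠ 0)
    (C D : ℝ → ℝ) (hC : Differentiable ℝ C) (hD : Differentiable ℝ D) :
    ((∀ x t : ℝ,
        deriv (fun s => uTrig a₁ C x s) t
          = deriv (fun y => deriv (fun z => uTrig a₁ C z t) y
              + α₁ * vTrig a₁ D y t * deriv (fun z => vTrig a₁ D z t) y) x
            - a₁ ^ 2 * α₁ * (vTrig a₁ D x t) ^ 2
            - 3 * α₁ * vTrig a₁ D x t * iteratedDeriv 2 (fun z => vTrig a₁ D z t) x) ∧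
      (∀ x t : ℝ,
        deriv (fun s => vTrig a₁ D x s) t
          = iteratedDeriv 2 (fun z => uTrig a₁ C z t) x
            + a₁ ^ 2 * uTrig a₁ C x t + β₂ * vTrig a₁ D x t)) ↔
    (∀ t : ℝ, deriv C t = -a₁ ^ 2 * C t ∧ deriv D t = β₂ * D t) := by
  have hid : ∀ x : ℝ, HasDerivAt (fun z : ℝ => a₁ * z) a₁ x := fun x => by
    simpa using (hasDerivAt_id x).const_mul a₁
  -- time derivatives
  have hut : ∀ x t : ℝ, deriv (fun s => uTrig a₁ C x s) t
      = deriv C t * Real.cos (a₁ * x) := fun x t => by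
    simpa [uTrig] using ((hC t).hasDerivAt.mul_const (Real.cos (a₁ * x))).deriv
  have hvt : ∀ x t : ℝ, deriv (fun s => vTrig a₁ D x s) t
      = deriv D t * (1 + Real.sin (a₁ * x)) := fun x t => by
    simpa [vTrig] using ((hD t).hasDerivAt.mul_const (1 + Real.sin (a₁ * x))).deriv
  -- space derivatives
  have hux : ∀ t : ℝ, ∀ x : ℝ, HasDerivAt (fun z => uTrig a₁ C z t)
      (C t * (-Real.sin (a₁ * x) * a₁)) x := fun t x => by
    simpa [uTrig] using ((hid x).cos).const_mul (C t)
  have hvx : ∀ t : ℝ, ∀ x : ℝ, HasDerivAt (fun z => vTrig a₁ D z t)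
      (D t * (Real.cos (a₁ * x) * a₁)) x := fun t x => by
    have := ((hasDerivAt_const x (1:ℝ)).add ((hid x).sin)).const_mul (D t)
    simpa [vTrig] using this
  have hux' : ∀ t : ℝ, deriv (fun z => uTrig a₁ C z t)
      = fun x => C t * (-Real.sin (a₁ * x) * a₁) := fun t =>
    funext fun x => (hux t x).deriv
  have hvx' : ∀ t : ℝ, deriv (fun z => vTrig a₁ D z t)
      = fun x => D t * (Real.cos (a₁ * x) * a₁) := fun t =>
    funext fun x => (hvx t x).deriv
  have hux2 : ∀ t x : ℝ, iteratedDeriv 2 (fun z => uTrig a₁ C z t) x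
      = -(C t * a₁ ^ 2) * Real.cos (a₁ * x) := fun t x => by
    rw [iteratedDeriv_succ, iteratedDeriv_one, hux' t]
    have : HasDerivAt (fun y => C t * (-Real.sin (a₁ * y) * a₁))
        (C t * (-(Real.cos (a₁ * x) * a₁) * a₁)) x := by
      simpa using (((hid x).sin.neg).mul_const a₁).const_mul (C t)
    rw [this.deriv]; ring
  have hvx2 : ∀ t x : ℝ, iteratedDeriv 2 (fun z => vTrig a₁ D z t) x
      = -(D t * a₁ ^ 2) * Real.sin (a₁ * x) := fun t x => by
    rw [iteratedDeriv_succ, iteratedDeriv_one, hvx' t]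
    have : HasDerivAt (fun y => D t * (Real.cos (a₁ * y) * a₁))
        (D t * (-Real.sin (a₁ * x) * a₁ * a₁)) x := by
      simpa using (((hid x).cos).mul_const a₁).const_mul (D t)
    rw [this.deriv]; ring
  -- derivative of the flux term
  have hflux : ∀ t x : ℝ,
      deriv (fun y => C t * (-Real.sin (a₁ * y) * a₁)
          + α₁ * (D t * (1 + Real.sin (a₁ * y))) * (D t * (Real.cos (a₁ * y) * a₁))) x
        = C t * (-(Real.cos (a₁ * x) * a₁) * a₁)
          + ((α₁ * (D t * (Real.cos (a₁ * x) * a₁))) * (D t * (Real.cos (a₁ * x) * a₁))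
            + (α₁ * (D t * (1 + Real.sin (a₁ * x)))) * (D t * (-Real.sin (a₁ * x) * a₁ * a₁))) := by
    intro t x
    have h1 : HasDerivAt (fun y => C t * (-Real.sin (a₁ * y) * a₁))
        (C t * (-(Real.cos (a₁ * x) * a₁) * a₁)) x := by
      simpa using (((hid x).sin.neg).mul_const a₁).const_mul (C t)
    have h2 : HasDerivAt (fun y => α₁ * (D t * (1 + Real.sin (a₁ * y))))
        (α₁ * (D t * (Real.cos (a₁ * x) * a₁))) x := by
      simpa using (((hasDerivAt_const x (1:ℝ)).add ((hid x).sin)).const_mul (D t)).const_mul α₁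
    have h3 : HasDerivAt (fun y => D t * (Real.cos (a₁ * y) * a₁))
        (D t * (-Real.sin (a₁ * x) * a₁ * a₁)) x := by
      simpa using (((hid x).cos).mul_const a₁).const_mul (D t)
    exact (h1.add (h2.mul h3)).deriv
  constructor
  · rintro ⟨h1, h2⟩ t
    have e1 := h1 0 t
    have e2 := h2 0 t
    simp only [hut, hux' t, hvx' t, hvx2] at e1
    simp only [vTrig] at e1
    rw [hflux t 0] at e1
    simp only [hvt, hux2] at e2
    simp only [uTrig, vTrig] at e2
    simp only [mul_zero, Real.sin_zero, Real.cos_zero] at e1 e2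
    constructor
    · nlinarith [e1]
    · nlinarith [e2]
  · intro h
    constructor
    · intro x t
      simp only [hut, hux' t, hvx' t, hvx2]
      simp only [vTrig]
      rw [hflux t x, (h t).1]
      have hpy := Real.sin_sq_add_cos_sq (a₁ * x)
      linear_combination (-(a₁ ^ 2 * α₁ * (D t) ^ 2)) * hpy
    · intro x t
      simp only [hvt, hux2]
      simp only [vTrig, uTrig]
      rw [(h t).2]
      ring
end

section
/- Let α₁, β₂, a₁, c, d be real constants. Define u(x,t) = c·e^{−a₁²t}cos(a₁x) and v(x,t) = d·e^{β₂t}(1 + sin(a₁x)). Then u and v satisfy the system ∂u/∂t = ∂/∂x(∂u/∂x + α₁ v ∂v/∂x) − a₁²α₁v² − 3α₁ v ∂²v/∂x² and ∂v/∂t = ∂²u/∂x² + a₁²u + β₂v for all (x,t) ∈ ℝ². -/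
/-- `u(x, t) = c e^{−a₁² t} cos(a₁ x)`. -/
noncomputable def uTrigExact (a₁ c : ℝ) (x t : ℝ) : ℝ :=
  c * Real.exp (-a₁ ^ 2 * t) * Real.cos (a₁ * x)

/-- `v(x, t) = d e^{β₂ t} (1 + sin(a₁ x))`. -/
noncomputable def vTrigExact (a₁ β₂ d : ℝ) (x t : ℝ) : ℝ :=
  d * Real.exp (β₂ * t) * (1 + Real.sin (a₁ * x))

/-! Both components separate variables with a single exponential in time, so `u_t = -a₁² u`
and `v_t = β₂ v`, while in space `u_xx = -a₁² u` and, with `V = d e^{β₂ t}`,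
`v_x = a₁ V cos(a₁ x)` and `v_xx = -a₁² V sin(a₁ x)`. The second equation reduces to
`u_xx + a₁² u = 0`; in the first, `u_t = u_xx` and the `α₁`-terms `v_x² - 2 v v_xx - a₁² v²`
collapse to `a₁² V² (cos² + sin² - 1) = 0`. -/

open Real

theorem deriv_deriv_add_mul_mul_deriv {𝕜 : Type*} [NontriviallyNormedField 𝕜] {f g : 𝕜 → 𝕜}
    (hf : ContDiff 𝕜 2 f) (hg : ContDiff 𝕜 2 g) (α x : 𝕜) :
    deriv (fun y => deriv f y + α * g y * deriv g y) x
      = iteratedDeriv 2 f x + α * (deriv g x ^ 2 + g x * iteratedDeriv 2 g x) := by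
  have hg₀ : Differentiable 𝕜 g := hg.differentiable (by norm_num)
  have hf₁ : Differentiable 𝕜 (deriv f) := by
    simpa using hf.differentiable_iteratedDeriv 1 (by norm_num)
  have hg₁ : Differentiable 𝕜 (deriv g) := by
    simpa using hg.differentiable_iteratedDeriv 1 (by norm_num)
  have hflux :=
    (hf₁ x).hasDerivAt.fun_add (((hg₀ x).hasDerivAt.const_mul α).fun_mul (hg₁ x).hasDerivAt)
  rw [hflux.deriv, iteratedDeriv_succ, iteratedDeriv_one, iteratedDeriv_succ, iteratedDeriv_one]
  ring

theorem deriv_const_mul_exp_mul_mul (p k q t : ℝ) :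
    deriv (fun s => p * exp (k * s) * q) t = k * (p * exp (k * t) * q) := by
  rw [((((hasDerivAt_id' t).const_mul k).exp.const_mul p).mul_const q).deriv]
  simp only [mul_one]
  ring

theorem deriv_sin_mul (a x : ℝ) : deriv (fun z => sin (a * z)) x = a * cos (a * x) := by
  simpa using deriv_comp_mul_left a sin x

theorem iteratedDeriv_two_sin_mul (a x : ℝ) :
    iteratedDeriv 2 (fun z => sin (a * z)) x = -a ^ 2 * sin (a * x) := by
  simp [iteratedDeriv_comp_const_mul contDiff_sin]

theorem iteratedDeriv_two_cos_mul (a x : ℝ) :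
    iteratedDeriv 2 (fun z => cos (a * z)) x = -a ^ 2 * cos (a * x) := by
  simp [iteratedDeriv_comp_const_mul contDiff_cos]

section
variable (a₁ β₂ c d x t : ℝ)

theorem contDiff_uTrigExact : ContDiff ℝ 2 (fun z => uTrigExact a₁ c z t) := by
  unfold uTrigExact; fun_prop

theorem contDiff_vTrigExact : ContDiff ℝ 2 (fun z => vTrigExact a₁ β₂ d z t) := by
  unfold vTrigExact; fun_prop

theorem deriv_uTrigExact_time :
    deriv (fun s => uTrigExact a₁ c x s) t = -a₁ ^ 2 * uTrigExact a₁ c x t :=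
  deriv_const_mul_exp_mul_mul _ _ _ _

theorem deriv_vTrigExact_time :
    deriv (fun s => vTrigExact a₁ β₂ d x s) t = β₂ * vTrigExact a₁ β₂ d x t :=
  deriv_const_mul_exp_mul_mul _ _ _ _

theorem iteratedDeriv_two_uTrigExact :
    iteratedDeriv 2 (fun z => uTrigExact a₁ c z t) x = -a₁ ^ 2 * uTrigExact a₁ c x t := by
  simp only [uTrigExact, iteratedDeriv_const_mul_field, iteratedDeriv_two_cos_mul]
  ring

theorem deriv_vTrigExact :
    deriv (fun z => vTrigExact a₁ β₂ d z t) x = d * exp (β₂ * t) * (a₁ * cos (a₁ * x)) := by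
  simp only [vTrigExact, deriv_const_mul_field', deriv_const_add', deriv_sin_mul]

theorem iteratedDeriv_two_vTrigExact :
    iteratedDeriv 2 (fun z => vTrigExact a₁ β₂ d z t) x
      = d * exp (β₂ * t) * (-a₁ ^ 2 * sin (a₁ * x)) := by
  simp only [vTrigExact, iteratedDeriv_const_mul_field, iteratedDeriv_const_add two_pos,
    iteratedDeriv_two_sin_mul]

end

/-- The pair `(u, v)` given by `u(x,t) = c e^{−a₁² t} cos(a₁ x)` and
`v(x,t) = d e^{β₂ t} (1 + sin(a₁ x))` solves the system
`u_t = (u_x + α₁ v v_x)_x − a₁² α₁ v² − 3 α₁ v v_{xx}`, `v_t = u_{xx} + a₁² u + β₂ v`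
for all `(x, t) ∈ ℝ²`. -/
theorem trig_exact_solution
    (α₁ β₂ a₁ c d : ℝ) :
    (∀ x t : ℝ,
      deriv (fun s => uTrigExact a₁ c x s) t
        = deriv (fun y => deriv (fun z => uTrigExact a₁ c z t) y
            + α₁ * vTrigExact a₁ β₂ d y t * deriv (fun z => vTrigExact a₁ β₂ d z t) y) x
          - a₁ ^ 2 * α₁ * (vTrigExact a₁ β₂ d x t) ^ 2
          - 3 * α₁ * vTrigExact a₁ β₂ d x t
            * iteratedDeriv 2 (fun z => vTrigExact a₁ β₂ d z t) x) ∧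
    (∀ x t : ℝ,
      deriv (fun s => vTrigExact a₁ β₂ d x s) t
        = iteratedDeriv 2 (fun z => uTrigExact a₁ c z t) x
          + a₁ ^ 2 * uTrigExact a₁ c x t + β₂ * vTrigExact a₁ β₂ d x t) := by
  refine ⟨fun x t => ?_, fun x t => ?_⟩
  · rw [deriv_deriv_add_mul_mul_deriv (contDiff_uTrigExact a₁ c t)
        (contDiff_vTrigExact a₁ β₂ d t), deriv_uTrigExact_time, iteratedDeriv_two_uTrigExact,
      deriv_vTrigExact, iteratedDeriv_two_vTrigExact]
    simp only [vTrigExact]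
    linear_combination (-α₁ * (d * exp (β₂ * t) * a₁) ^ 2) * sin_sq_add_cos_sq (a₁ * x)
  · rw [deriv_vTrigExact_time, iteratedDeriv_two_uTrigExact]
    ring
end
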